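/- arXiv:2401.12883 — 10 statements merged into one kernel-verified Lean document; each statement's English description precedes it below -/
import Mathlib

section
/- For any finite simple graphs G and H, there exist a polynomial p with rational coefficients and a natural number k₀ such that for every natural number k ≥ k₀, the number π_G^{(H)}(k) of induced subgraphs of C_k(G) isomorphic to H equals p evaluated at k. -/
open SimpleGraph Finset

/-- A proper coloring of `G` with colors `Fin k` (value `i` represents color `i+1`). -/
def IsProperColoring {V : Type*} (G : SimpleGraph V) {k : ℕ} (c : V → Fin k) : Prop :=
  ∀ ⦃u v : V⦄, G.Adj u v → c u ≠ c v

/-- The `k`-coloring graph of `G`: vertices are proper `k`-colorings of `G`, two colorings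
adjacent iff they differ at exactly one vertex of `G`. -/
def ColGraph {V : Type*} (G : SimpleGraph V) (k : ℕ) :
    SimpleGraph {c : V → Fin k // IsProperColoring G c} where
  Adj c d := ∃! v, c.1 v ≠ d.1 v
  symm := by
    constructor
    rintro c d ⟨v, hv, hu⟩
    exact ⟨v, hv.symm, fun w hw => hu w hw.symm⟩
  loopless := by
    constructor
    rintro c ⟨v, hv, -⟩
    exact hv rfl

/-- The number of edges of the `k`-coloring graph of `G`. -/
noncomputable def numEdges {V : Type*} (G : SimpleGraph V) (k : ℕ) : ℕ :=
  Nat.card (ColGraph G k).edgeSet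

/-- The number of proper `k`-colorings of `G` (the chromatic polynomial evaluated at `k`). -/
noncomputable def numColorings {V : Type*} (G : SimpleGraph V) (k : ℕ) : ℕ :=
  Nat.card {c : V → Fin k // IsProperColoring G c}

/-- `π_G^{(H)}(k)`: the number of vertex subsets of the `k`-coloring graph of `G`
inducing a subgraph isomorphic to `H`. -/
noncomputable def inducedCopies {V W : Type*} (G : SimpleGraph V) (H : SimpleGraph W)
    (k : ℕ) : ℕ :=
  Nat.card {S : Set {c : V → Fin k // IsProperColoring G c} //
    Nonempty ((ColGraph G k).induce S ≃g H)}

/-- The number of proper `k`-colorings of `G − v` in which every neighbor of `v`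
avoids the first `t` colors (colors `1, …, t`, i.e. `Fin k` values `< t`). -/
noncomputable def restrainedCount {V : Type*} (G : SimpleGraph V) (v : V) (t k : ℕ) : ℕ :=
  Nat.card {c : ↥{w : V | w ≠ v} → Fin k //
    IsProperColoring (G.induce {w : V | w ≠ v}) c ∧
    ∀ w : ↥{w : V | w ≠ v}, G.Adj v ↑w → t ≤ (c w).val}

/-- The `s`-dimensional hypercube graph: vertices are functions `Fin s → Bool`,
adjacent iff they differ in exactly one coordinate. -/
def hypercube (s : ℕ) : SimpleGraph (Fin s → Bool) where
  Adj x y := ∃! i, x i ≠ y i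
  symm := by
    constructor
    rintro x y ⟨i, hi, hu⟩
    exact ⟨i, hi.symm, fun j hj => hu j hj.symm⟩
  loopless := by
    constructor
    rintro x ⟨i, hi, -⟩
    exact hi rfl

section
variable {V W : Type*} (G : SimpleGraph V) (H : SimpleGraph W)

def Good {C : Type*} (F : V × W → C) : Prop :=
  (∀ w : W, ∀ ⦃u v : V⦄, G.Adj u v → F (u, w) ≠ F (v, w)) ∧
  (∀ w w' : W, (∀ v, F (v, w) = F (v, w')) → w = w') ∧
  (∀ w w' : W, H.Adj w w' ↔ ∃! v, F (v, w) ≠ F (v, w'))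

theorem good_comp {C D : Type*} (g : C → D) (hg : Function.Injective g)
    (F : V × W → C) : Good G H (g ∘ F) ↔ Good G H F := by
  unfold Good
  simp only [Function.comp_apply, hg.ne_iff, hg.eq_iff]

variable {k : ℕ}

/-- The family of colorings encoded by a good `F`. -/
def colF (F : V × W → Fin k) (hF : Good G H F) (w : W) :
    {c : V → Fin k // IsProperColoring G c} :=
  ⟨fun v => F (v, w), fun _ _ h => hF.1 w h⟩

/-- The fiber equivalence: good `F`s with range-set `S` correspond to isomorphisms
`H ≃g induce S`. -/
noncomputable def fiberEquiv (S : Set {c : V → Fin k // IsProperColoring G c}) :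
    {F : {F : V × W → Fin k // Good G H F} //
      Set.range (colF G H F.1 F.2) = S} ≃ (H ≃g (ColGraph G k).induce S) where
  toFun F := by
    refine ⟨Equiv.ofBijective (fun w => ⟨colF G H F.1.1 F.1.2 w, F.2.le (Set.mem_range_self w)⟩)
      ⟨fun w w' h => F.1.2.2.1 w w'
        (fun v => congrFun (congrArg Subtype.val (congrArg Subtype.val h)) v),
       fun s => ?_⟩, ?_⟩
    · obtain ⟨w, hw⟩ := F.2.ge s.2
      exact ⟨w, Subtype.ext hw⟩
    · intro w w'
      exact (F.1.2.2.2 w w').symm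
  invFun e :=
    ⟨⟨fun p => ((e p.2 : S) : {c : V → Fin k // IsProperColoring G c}).1 p.1,
      by
        refine ⟨fun w u v h => (e w).1.2 h, fun w w' h => ?_, fun w w' => ?_⟩
        · exact e.injective (Subtype.ext (Subtype.ext (funext h)))
        · exact e.map_rel_iff.symm⟩,
      by
        ext c
        constructor
        · rintro ⟨w, rfl⟩
          exact (e w).2
        · intro hc
          obtain ⟨w, hw⟩ := e.surjective ⟨c, hc⟩
          exact ⟨w, by simp [colF, hw]⟩⟩
  left_inv F := by
    apply Subtype.ext
    apply Subtype.ext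
    rfl
  right_inv e := by
    apply RelIso.ext
    intro w
    apply Subtype.ext
    rfl

end

section count
variable {V W : Type*} [Fintype V] [Fintype W] (G : SimpleGraph V) (H : SimpleGraph W)

instance finiteIso {X : Type*} [Finite W] [Finite X] (K : SimpleGraph X) :
    Finite (H ≃g K) :=
  Finite.of_injective (fun e => e.toEquiv) (fun e f h => RelIso.ext (fun x => congrFun (congrArg (⇑) h) x))

open scoped Classical in
theorem card_iso_eq (X : Type*) [Finite X] (K : SimpleGraph X) :
    Nat.card (H ≃g K) = if Nonempty (K ≃g H) then Nat.card (H ≃g H) else 0 := by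
  split_ifs with h
  · obtain ⟨f⟩ := h
    exact Nat.card_congr ⟨fun e => e.trans f, fun g => g.trans f.symm,
      fun e => RelIso.ext fun x => f.symm_apply_apply _,
      fun g => RelIso.ext fun x => f.apply_symm_apply _⟩
  · have : IsEmpty (H ≃g K) := ⟨fun e => h ⟨e.symm⟩⟩
    exact Nat.card_of_isEmpty

theorem card_good (k : ℕ) :
    Nat.card {F : V × W → Fin k // Good G H F} =
      Nat.card (H ≃g H) * inducedCopies G H k := by
  classical
  set Col := {c : V → Fin k // IsProperColoring G c}
  haveI : Fintype Col := Fintype.ofFinite _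
  haveI : Fintype (Set Col) := Fintype.ofFinite _
  haveI : Fintype {F : V × W → Fin k // Good G H F} := Fintype.ofFinite _
  set κ : {F : V × W → Fin k // Good G H F} → Set Col :=
    fun F => Set.range (colF G H F.1 F.2) with hκ
  calc Nat.card {F : V × W → Fin k // Good G H F}
      = Fintype.card {F : V × W → Fin k // Good G H F} := Nat.card_eq_fintype_card
    _ = Fintype.card (Σ S : Set Col, {F // κ F = S}) :=
        (Fintype.card_congr (Equiv.sigmaFiberEquiv κ)).symm
    _ = ∑ S : Set Col, Fintype.card {F // κ F = S} := Fintype.card_sigma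
    _ = ∑ S : Set Col, Nat.card (H ≃g (ColGraph G k).induce S) := by
        refine Finset.sum_congr rfl fun S _ => ?_
        rw [← Nat.card_eq_fintype_card]
        exact Nat.card_congr (fiberEquiv G H S)
    _ = ∑ S : Set Col,
          (if Nonempty ((ColGraph G k).induce S ≃g H) then Nat.card (H ≃g H) else 0) := by
        refine Finset.sum_congr rfl fun S _ => ?_
        exact card_iso_eq H _ _
    _ = Nat.card (H ≃g H) * inducedCopies G H k := by
        rw [Finset.sum_ite, Finset.sum_const_zero, Finset.sum_const, add_zero,
          smul_eq_mul, mul_comm]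
        congr 1
        rw [inducedCopies, Nat.card_eq_fintype_card, Fintype.card_subtype]
end count

section kernel
variable {V W : Type*} [Fintype V] [Fintype W] (G : SimpleGraph V) (H : SimpleGraph W)

instance finiteSetoid {A : Type*} [Finite A] : Finite (Setoid A) :=
  Finite.of_injective (fun s => s.r) fun s t h =>
    Setoid.ext fun a b => iff_of_eq (congrFun (congrFun h a) b)

theorem good_of_ker {k : ℕ} {F : V × W → Fin k} {R : Setoid (V × W)}
    (h : Setoid.ker F = R) :
    Good G H F ↔ Good G H (Quotient.mk R) := by
  subst h
  have hq : Function.Injective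
      (Quotient.lift F (fun a b hab => hab) : Quotient (Setoid.ker F) → Fin k) := by
    rintro ⟨a⟩ ⟨b⟩ hab
    exact Quotient.sound hab
  have hF : F = (Quotient.lift F (fun a b hab => hab)) ∘ (Quotient.mk (Setoid.ker F)) := rfl
  conv_lhs => rw [hF]
  rw [good_comp G H _ hq]

/-- Functions with kernel exactly `R` correspond to embeddings of the quotient. -/
def kerFiberEquiv {A : Type*} (R : Setoid A) (k : ℕ) :
    {F : A → Fin k // Setoid.ker F = R} ≃ (Quotient R ↪ Fin k) where
  toFun F := ⟨Quotient.lift F.1 (fun a b hab => by rw [← F.2] at hab; exact hab), by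
    rintro ⟨a⟩ ⟨b⟩ hab
    apply Quotient.sound
    rw [← F.2]
    exact (hab : F.1 a = F.1 b)⟩
  invFun ι := ⟨ι ∘ Quotient.mk R, Setoid.ext fun a b =>
    ⟨fun h => Quotient.exact (ι.injective h), fun h => congrArg ι (Quotient.sound h)⟩⟩
  left_inv F := Subtype.ext rfl
  right_inv ι := by
    ext x
    induction x using Quotient.ind
    rfl

noncomputable instance fintypeSetoid {A : Type*} [Finite A] : Fintype (Setoid A) :=
  Fintype.ofFinite _

open scoped Classical in
theorem card_good_sum (k : ℕ) :
    Nat.card {F : V × W → Fin k // Good G H F} =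
      ∑ R : Setoid (V × W),
        if Good G H (Quotient.mk R : V × W → Quotient R)
        then k.descFactorial (Nat.card (Quotient R)) else 0 := by
  classical
  haveI : Fintype {F : V × W → Fin k // Good G H F} := Fintype.ofFinite _
  set κ : {F : V × W → Fin k // Good G H F} → Setoid (V × W) :=
    fun F => Setoid.ker F.1 with hκ
  rw [Nat.card_eq_fintype_card,
    Fintype.card_congr (Equiv.sigmaFiberEquiv κ).symm, Fintype.card_sigma]
  refine Finset.sum_congr rfl fun R _ => ?_
  split_ifs with hR
  · have e1 : {F : {F : V × W → Fin k // Good G H F} // κ F = R} ≃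
        {F : V × W → Fin k // Setoid.ker F = R} :=
      (Equiv.subtypeSubtypeEquivSubtypeInter _ _).trans
        (Equiv.subtypeEquivRight fun F =>
          ⟨fun h => h.2, fun h => ⟨(good_of_ker G H h).mpr hR, h⟩⟩)
    haveI : Fintype (Quotient R) := Fintype.ofFinite _
    rw [Fintype.card_congr (e1.trans (kerFiberEquiv R k)),
      Fintype.card_embedding_eq, Fintype.card_fin, Nat.card_eq_fintype_card]
  · haveI : IsEmpty {F : {F : V × W → Fin k // Good G H F} // κ F = R} :=
      ⟨fun F => hR ((good_of_ker G H F.2).mp F.1.2)⟩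
    exact Fintype.card_of_isEmpty
end kernel

section final
variable {V W : Type*} [Fintype V] [Fintype W] (G : SimpleGraph V) (H : SimpleGraph W)

theorem descFactorial_eval {m k : ℕ} (h : m ≤ k) :
    (∏ i ∈ Finset.range m, (Polynomial.X - Polynomial.C (i : ℚ))).eval (k : ℚ) =
      (k.descFactorial m : ℚ) := by
  rw [Nat.descFactorial_eq_prod_range, Nat.cast_prod, Polynomial.eval_prod]
  refine Finset.prod_congr rfl fun i hi => ?_
  rw [Polynomial.eval_sub, Polynomial.eval_X, Polynomial.eval_C,
    Nat.cast_sub (le_of_lt (lt_of_lt_of_le (Finset.mem_range.mp hi) h))]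

theorem inducedCopies_eventually_polynomial' :
    ∃ (p : Polynomial ℚ) (k₀ : ℕ), ∀ k : ℕ, k₀ ≤ k →
      (inducedCopies G H k : ℚ) = p.eval (k : ℚ) := by
  classical
  refine ⟨Polynomial.C ((Nat.card (H ≃g H) : ℚ))⁻¹ * ∑ R : Setoid (V × W),
      if Good G H (Quotient.mk R)
      then ∏ i ∈ Finset.range (Nat.card (Quotient R)) , (Polynomial.X - Polynomial.C (i : ℚ))
      else 0,
    Fintype.card (V × W), fun k hk => ?_⟩
  have hAut : (0 : ℚ) < Nat.card (H ≃g H) := by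
    haveI : Nonempty (H ≃g H) := ⟨RelIso.refl _⟩
    exact_mod_cast Nat.card_pos
  rw [Polynomial.eval_mul, Polynomial.eval_C, Polynomial.eval_finset_sum]
  have hsum : ∑ R : Setoid (V × W),
      Polynomial.eval (k : ℚ) (if Good G H (Quotient.mk R)
        then ∏ i ∈ Finset.range (Nat.card (Quotient R)),
          (Polynomial.X - Polynomial.C (i : ℚ)) else 0) =
      ((∑ R : Setoid (V × W),
        if Good G H (Quotient.mk R : V × W → Quotient R)
        then k.descFactorial (Nat.card (Quotient R)) else 0 : ℕ) : ℚ) := by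
    rw [Nat.cast_sum]
    refine Finset.sum_congr rfl fun R _ => ?_
    split_ifs with hR
    · refine descFactorial_eval (le_trans ?_ hk)
      have : Nat.card (Quotient R) ≤ Fintype.card (V × W) := by
        rw [← Nat.card_eq_fintype_card]
        exact Nat.card_le_card_of_surjective (Quotient.mk R) fun q => q.exists_rep
      exact this
    · simp
  rw [hsum, ← card_good_sum G H k, card_good G H k]
  push_cast
  rw [← mul_assoc, inv_mul_cancel₀ (ne_of_gt hAut), one_mul]
end final


/-- `π_G^{(H)}(k)` is eventually polynomial in `k`. -/
theorem inducedCopies_eventually_polynomial {V W : Type*} [Fintype V] [Fintype W]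
    (G : SimpleGraph V) (H : SimpleGraph W) :
    ∃ (p : Polynomial ℚ) (k₀ : ℕ), ∀ k : ℕ, k₀ ≤ k →
      (inducedCopies G H k : ℚ) = p.eval (k : ℚ) := by
  exact inducedCopies_eventually_polynomial' G H
end

section
/- For any finite simple graphs G and H and every natural number k, π_G^{(H)}(k+1) ≥ π_G^{(H)}(k); that is, the number of induced copies of H in the (k+1)-coloring graph of G is at least the number of induced copies of H in the k-coloring graph of G. -/
open SimpleGraph Finset

/-- `π_G^{(H)}` is monotone in `k`. -/
theorem inducedCopies_mono_in_k {V W : Type*} [Fintype V] [Fintype W]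
    (G : SimpleGraph V) (H : SimpleGraph W) (k : ℕ) :
    inducedCopies G H k ≤ inducedCopies G H (k + 1) := by
  classical
  set φ : {c : V → Fin k // IsProperColoring G c} →
      {c : V → Fin (k + 1) // IsProperColoring G c} :=
    fun c => ⟨fun v => (c.1 v).castSucc,
      fun u v huv h => c.2 huv (Fin.castSucc_injective k h)⟩ with hφ
  have hinj : Function.Injective φ := by
    intro c d h
    apply Subtype.ext
    funext v
    exact Fin.castSucc_injective k (congrFun (congrArg Subtype.val h) v)
  have hadj : ∀ c d, (ColGraph G (k + 1)).Adj (φ c) (φ d) ↔ (ColGraph G k).Adj c d := by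
    intro c d
    constructor
    · rintro ⟨v, hv, hu⟩
      exact ⟨v, fun h => hv (congrArg Fin.castSucc h),
        fun w hw => hu w fun h => hw (Fin.castSucc_injective k h)⟩
    · rintro ⟨v, hv, hu⟩
      exact ⟨v, fun h => hv (Fin.castSucc_injective k h),
        fun w hw => hu w fun h => hw (congrArg Fin.castSucc h)⟩
  have key : ∀ S : Set {c : V → Fin k // IsProperColoring G c},
      Nonempty ((ColGraph G k).induce S ≃g (ColGraph G (k + 1)).induce (φ '' S)) := by
    intro S
    refine ⟨⟨Equiv.Set.image φ S hinj, ?_⟩⟩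
    intro a b
    simpa using hadj a b
  let F : {S : Set {c : V → Fin k // IsProperColoring G c} //
        Nonempty ((ColGraph G k).induce S ≃g H)} →
      {S : Set {c : V → Fin (k + 1) // IsProperColoring G c} //
        Nonempty ((ColGraph G (k + 1)).induce S ≃g H)} :=
    fun S => ⟨φ '' S.1, ⟨(key S.1).some.symm.trans S.2.some⟩⟩
  have Finj : Function.Injective F := by
    intro S T h
    exact Subtype.ext (Set.image_injective.mpr hinj (congrArg Subtype.val h))
  exact Nat.card_le_card_of_injective F Finj
end

section
/- If G₁ and G₂ are finite simple graphs on the same vertex set such that every edge of G₁ is an edge of G₂, then for every finite simple graph H and every natural number k, π_{G₁}^{(H)}(k) ≥ π_{G₂}^{(H)}(k). -/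
open SimpleGraph Finset

/-- `π_G^{(H)}` is antitone in the base graph `G`. -/
theorem inducedCopies_anti_in_G {V W : Type*} [Fintype V] [Fintype W]
    (G₁ G₂ : SimpleGraph V) (hle : G₁ ≤ G₂)
    (H : SimpleGraph W) (k : ℕ) :
    inducedCopies G₂ H k ≤ inducedCopies G₁ H k := by
  classical
  have hι : ∀ c : V → Fin k, IsProperColoring G₂ c → IsProperColoring G₁ c :=
    fun c hc u v h => hc (hle h)
  let ι : {c : V → Fin k // IsProperColoring G₂ c} → {c : V → Fin k // IsProperColoring G₁ c} :=
    fun c => ⟨c.1, hι c.1 c.2⟩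
  have hinj : Function.Injective ι := fun a b h => by have h2 := congrArg Subtype.val h; exact Subtype.ext h2
  have hiso : ∀ S : Set {c : V → Fin k // IsProperColoring G₂ c},
      Nonempty ((ColGraph G₂ k).induce S ≃g H) →
      Nonempty ((ColGraph G₁ k).induce (ι '' S) ≃g H) := by
    rintro S ⟨f⟩
    refine ⟨f.comp (SimpleGraph.Iso.symm ⟨Equiv.Set.image ι S hinj, ?_⟩)⟩
    rintro ⟨a, ha⟩ ⟨b, hb⟩
    exact Iff.rfl
  exact Nat.card_le_card_of_injective
    (fun S => (⟨ι '' S.1, hiso S.1 S.2⟩ :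
      {S : Set {c : V → Fin k // IsProperColoring G₁ c} //
        Nonempty ((ColGraph G₁ k).induce S ≃g H)}))
    (fun S T h => Subtype.ext (Set.image_injective.mpr hinj (Subtype.ext_iff.mp h)))
end

section
/- For every finite simple graph G and every natural number k, the number of edges of the k-coloring graph C_k(G) equals C(k,2) · Σ_{v ∈ V(G)} N_v(k), where for each vertex v of G, N_v(k) denotes the number of proper k-colorings c of the induced subgraph G − v such that c(w) ∉ {1,2} for every neighbor w of v in G. -/
open SimpleGraph Finset

section AuxNE

variable {V : Type*}

/-- Auxiliary: proper colorings of `G - v` avoiding two colors `a`, `b` on neighbors of `v`. -/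
private def Fib (G : SimpleGraph V) (k : ℕ) (v : V) (a b : Fin k) : Type _ :=
  {c : ↥{w : V | w ≠ v} → Fin k //
    IsProperColoring (G.induce {w : V | w ≠ v}) c ∧
    ∀ w : ↥{w : V | w ≠ v}, G.Adj v ↑w → c w ≠ a ∧ c w ≠ b}

private instance [Finite V] (G : SimpleGraph V) (k : ℕ) (v : V) (a b : Fin k) :
    Finite (Fib G k v a b) := by
  unfold Fib; infer_instance

private lemma fib_card (G : SimpleGraph V) (k : ℕ) (v : V) {a b : Fin k} (hab : a ≠ b) :
    Nat.card (Fib G k v a b) = restrainedCount G v 2 k := by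
  have hk : 2 ≤ k := by
    have h1 := a.isLt; have h2 := b.isLt
    have h3 : a.val ≠ b.val := fun h => hab (Fin.ext h)
    omega
  set z0 : Fin k := ⟨0, by omega⟩ with hz0
  set z1 : Fin k := ⟨1, by omega⟩ with hz1
  have h01 : z0 ≠ z1 := by simp [hz0, hz1, Fin.ext_iff]
  set σ : Fin k ≃ Fin k :=
    (Equiv.swap a z0).trans (Equiv.swap ((Equiv.swap a z0) b) z1) with hσ
  have hσa : σ a = z0 := by
    have hb' : (Equiv.swap a z0) b ≠ z0 := fun h =>
      hab ((Equiv.swap a z0).injective (h.trans (Equiv.swap_apply_left a z0).symm)).symm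
    simp only [hσ, Equiv.trans_apply, Equiv.swap_apply_left]
    exact Equiv.swap_apply_of_ne_of_ne hb'.symm h01
  have hσb : σ b = z1 := by
    simp only [hσ, Equiv.trans_apply, Equiv.swap_apply_left]
  have key : ∀ x : Fin k, (x ≠ a ∧ x ≠ b) ↔ 2 ≤ (σ x).val := by
    intro x
    constructor
    · rintro ⟨h1, h2⟩
      have hx0 : (σ x).val ≠ 0 := by
        intro h
        exact h1 (σ.injective (Fin.ext (h.trans (congrArg Fin.val hσa).symm)))
      have hx1 : (σ x).val ≠ 1 := by
        intro h
        exact h2 (σ.injective (Fin.ext (h.trans (congrArg Fin.val hσb).symm)))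
      omega
    · intro h
      constructor
      · intro he
        have h0 : (σ x).val = 0 := by rw [he, hσa]
        omega
      · intro he
        have h0 : (σ x).val = 1 := by rw [he, hσb]
        omega
  rw [restrainedCount]
  apply Nat.card_congr
  refine Equiv.subtypeEquiv (Equiv.piCongrRight fun _ => σ) ?_
  intro c
  constructor
  · rintro ⟨hp, hav⟩
    refine ⟨?_, ?_⟩
    · intro u w h he
      exact hp h (σ.injective he)
    · intro w hw
      exact (key (c w)).mp (hav w hw)
  · rintro ⟨hp, hav⟩
    refine ⟨?_, ?_⟩
    · intro u w h he
      exact hp h (congrArg σ he)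
    · intro w hw
      exact (key (c w)).mpr (hav w hw)

/-- Extend a coloring of `G - v` by assigning color `a` to `v`. -/
private noncomputable def extFun (k : ℕ) (v : V) (a : Fin k)
    (c : ↥{w : V | w ≠ v} → Fin k) : V → Fin k :=
  fun u => @dite _ (u = v) (Classical.dec _) (fun _ => a) (fun h => c ⟨u, h⟩)

private lemma extFun_self (k : ℕ) (v : V) (a : Fin k) (c : ↥{w : V | w ≠ v} → Fin k) :
    extFun k v a c v = a := by unfold extFun; exact dif_pos rfl

private lemma extFun_ne (k : ℕ) (v : V) (a : Fin k) (c : ↥{w : V | w ≠ v} → Fin k)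
    {u : V} (h : u ≠ v) : extFun k v a c u = c ⟨u, h⟩ := by unfold extFun; exact dif_neg h

private lemma ext_proper (G : SimpleGraph V) {k : ℕ} {v : V} {a : Fin k}
    {c : ↥{w : V | w ≠ v} → Fin k}
    (hp : IsProperColoring (G.induce {w : V | w ≠ v}) c)
    (hav : ∀ w : ↥{w : V | w ≠ v}, G.Adj v ↑w → c w ≠ a) :
    IsProperColoring G (extFun k v a c) := by
  intro u w h
  by_cases hu : u = v <;> by_cases hw : w = v
  · rw [hu, hw] at h; exact absurd h (G.irrefl)
  · rw [hu] at h ⊢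
    rw [extFun_self, extFun_ne k v a c hw]
    exact (hav ⟨w, hw⟩ h).symm
  · rw [hw] at h ⊢
    rw [extFun_ne k v a c hu, extFun_self]
    exact hav ⟨u, hu⟩ (G.adj_symm h)
  · rw [extFun_ne k v a c hu, extFun_ne k v a c hw]
    exact @hp ⟨u, hu⟩ ⟨w, hw⟩ h

private lemma card_pairs [Fintype V] (G : SimpleGraph V) (k : ℕ) :
    Nat.card (Σ v : V, Σ ab : {p : Fin k × Fin k // p.1 ≠ p.2}, Fib G k v ab.1.1 ab.1.2)
      = Nat.card {p : {c : V → Fin k // IsProperColoring G c} ×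
          {c : V → Fin k // IsProperColoring G c} // (ColGraph G k).Adj p.1 p.2} := by
  refine Nat.card_eq_of_bijective
    (fun x => ⟨(⟨extFun k x.1 x.2.1.1.1 x.2.2.1,
        ext_proper G x.2.2.2.1 (fun w hw => (x.2.2.2.2 w hw).1)⟩,
      ⟨extFun k x.1 x.2.1.1.2 x.2.2.1,
        ext_proper G x.2.2.2.1 (fun w hw => (x.2.2.2.2 w hw).2)⟩), ?_⟩) ⟨?_, ?_⟩
  · -- adjacency of the two extensions
    obtain ⟨v, ⟨⟨a, b⟩, hab⟩, ⟨c, hp, hav⟩⟩ := x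
    refine ⟨v, ?_, ?_⟩
    · show extFun k v a c v ≠ extFun k v b c v
      rw [extFun_self, extFun_self]
      exact hab
    · intro y hy
      by_contra hne
      refine hy ?_
      show extFun k v a c y = extFun k v b c y
      rw [extFun_ne k v a c hne, extFun_ne k v b c hne]
  · -- injectivity
    rintro ⟨v1, ⟨⟨a1, b1⟩, hab1⟩, ⟨c1, hp1, hav1⟩⟩ ⟨v2, ⟨⟨a2, b2⟩, hab2⟩, ⟨c2, hp2, hav2⟩⟩ h
    simp only [Subtype.mk.injEq, Prod.mk.injEq] at h
    obtain ⟨ea, eb⟩ := h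
    have hv : v1 = v2 := by
      by_contra hv
      have h1 : extFun k v2 a2 c2 v1 = c2 ⟨v1, hv⟩ := extFun_ne k v2 a2 c2 hv
      have h2 : extFun k v2 b2 c2 v1 = c2 ⟨v1, hv⟩ := extFun_ne k v2 b2 c2 hv
      have ha : a1 = c2 ⟨v1, hv⟩ := by
        rw [← h1, ← ea, extFun_self]
      have hb : b1 = c2 ⟨v1, hv⟩ := by
        rw [← h2, ← eb, extFun_self]
      exact hab1 (ha.trans hb.symm)
    subst hv
    have ha : a1 = a2 := by
      have := congrFun ea v1
      rwa [extFun_self, extFun_self] at this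
    have hb : b1 = b2 := by
      have := congrFun eb v1
      rwa [extFun_self, extFun_self] at this
    have hc : c1 = c2 := by
      funext w
      have := congrFun ea w.1
      rwa [extFun_ne k v1 a1 c1 w.2, extFun_ne k v1 a2 c2 w.2] at this
    subst ha; subst hb; subst hc
    rfl
  · -- surjectivity
    rintro ⟨⟨c, d⟩, hadj⟩
    obtain ⟨v, hv1, hv2⟩ := hadj
    have hcd : ∀ u : V, u ≠ v → c.1 u = d.1 u := by
      intro u hu
      by_contra h
      exact hu (hv2 u h)
    refine ⟨⟨v, ⟨(c.1 v, d.1 v), hv1⟩,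
      ⟨fun w => c.1 w.1, fun u w h => c.2 h, ?_⟩⟩, ?_⟩
    · intro w hw
      show c.1 ↑w ≠ c.1 v ∧ c.1 ↑w ≠ d.1 v
      refine ⟨(c.2 hw).symm, ?_⟩
      rw [hcd w.1 w.2]
      exact (d.2 hw).symm
    · refine Subtype.ext (Prod.ext ?_ ?_) <;> apply Subtype.ext
      · funext u
        show extFun k v (c.1 v) (fun w => c.1 ↑w) u = c.1 u
        by_cases hu : u = v
        · rw [hu, extFun_self]
        · exact extFun_ne k v _ _ hu
      · funext u
        show extFun k v (d.1 v) (fun w => c.1 ↑w) u = d.1 u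
        by_cases hu : u = v
        · rw [hu, extFun_self]
        · rw [extFun_ne k v _ _ hu]
          exact hcd u hu

private lemma card_ne_pairs (k : ℕ) :
    Nat.card {p : Fin k × Fin k // p.1 ≠ p.2} = 2 * Nat.choose k 2 := by
  have hdiag : Fintype.card {p : Fin k × Fin k // p.1 = p.2} = k := by
    rw [Fintype.card_congr
      (⟨fun x => x.1.1, fun a => ⟨(a, a), rfl⟩,
        fun x => Subtype.ext (Prod.ext rfl x.2), fun a => rfl⟩ :
        {p : Fin k × Fin k // p.1 = p.2} ≃ Fin k)]
    exact Fintype.card_fin k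
  have h1 : Nat.card {p : Fin k × Fin k // p.1 ≠ p.2} = k * k - k := by
    rw [Nat.card_eq_fintype_card]
    rw [Fintype.card_subtype_compl (fun p : Fin k × Fin k => p.1 = p.2)]
    rw [hdiag, Fintype.card_prod, Fintype.card_fin]
  have h2 : 2 * Nat.choose k 2 = k * k - k := by
    rcases k with _ | n
    · rfl
    · have he : Even ((n + 1) * n) := by
        simpa [Nat.mul_comm] using Nat.even_mul_succ_self n
      rw [Nat.choose_two_right, Nat.succ_sub_one, Nat.mul_div_cancel' he.two_dvd]
      have : (n + 1) * n + (n + 1) = (n + 1) * (n + 1) := by ring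
      omega
  rw [h1, h2]

end AuxNE

/-- formula for the number of edges of the `k`-coloring graph in terms of
restrained coloring counts. -/
theorem numEdges_eq_choose_mul_sum_restrained {V : Type*} [Fintype V]
    (G : SimpleGraph V) (k : ℕ) :
    numEdges G k = Nat.choose k 2 * ∑ v : V, restrainedCount G v 2 k := by
  classical
  letI : Fintype {c : V → Fin k // IsProperColoring G c} := Fintype.ofFinite _
  letI : DecidableRel (ColGraph G k).Adj := fun _ _ => Classical.dec _
  letI : ∀ (v : V) (ab : {p : Fin k × Fin k // p.1 ≠ p.2}), Fintype (Fib G k v ab.1.1 ab.1.2) :=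
    fun _ _ => Fintype.ofFinite _
  have h1 : Nat.card {p : {c : V → Fin k // IsProperColoring G c} ×
      {c : V → Fin k // IsProperColoring G c} // (ColGraph G k).Adj p.1 p.2}
      = 2 * numEdges G k := by
    have e : {p : {c : V → Fin k // IsProperColoring G c} ×
        {c : V → Fin k // IsProperColoring G c} // (ColGraph G k).Adj p.1 p.2}
        ≃ (ColGraph G k).Dart :=
      ⟨fun p => ⟨p.1, p.2⟩, fun d => ⟨d.toProd, d.adj⟩, fun p => rfl, fun d => rfl⟩
    rw [Nat.card_congr e, Nat.card_eq_fintype_card,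
      SimpleGraph.dart_card_eq_twice_card_edges, numEdges]
    congr 1
    rw [Nat.card_eq_fintype_card, SimpleGraph.edgeFinset_card]
  have h3 : Nat.card (Σ v : V, Σ ab : {p : Fin k × Fin k // p.1 ≠ p.2},
      Fib G k v ab.1.1 ab.1.2) = (2 * Nat.choose k 2) * ∑ v : V, restrainedCount G v 2 k := by
    rw [Nat.card_eq_fintype_card, Fintype.card_sigma]
    rw [Finset.mul_sum]
    apply Finset.sum_congr rfl
    intro v _
    rw [Fintype.card_sigma]
    have : ∀ ab : {p : Fin k × Fin k // p.1 ≠ p.2},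
        Fintype.card (Fib G k v ab.1.1 ab.1.2) = restrainedCount G v 2 k := by
      intro ab
      rw [← Nat.card_eq_fintype_card]
      exact fib_card G k v ab.2
    rw [Finset.sum_congr rfl (fun ab _ => this ab), Finset.sum_const, Finset.card_univ,
      ← Nat.card_eq_fintype_card, card_ne_pairs, smul_eq_mul]
  have := (card_pairs G k).symm.trans h3
  rw [h1] at this
  have h4 : 2 * numEdges G k = 2 * (Nat.choose k 2 * ∑ v : V, restrainedCount G v 2 k) := by
    rw [this]; ring
  exact Nat.eq_of_mul_eq_mul_left (by norm_num) h4
end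

section
/- Let n ≥ 1 and let K_n denote the complete graph on n vertices. Then for every natural number k, twice the number of edges of the k-coloring graph C_k(K_n) equals n · k(k−1)(k−2)⋯(k−n), i.e., n times the product ∏_{i=0}^{n} (k−i), as integers. -/
open SimpleGraph Finset

/-!
A proper coloring of `K_n` is an injection of the `n` vertices into the `k` colors, so there are
`k (k-1) ⋯ (k-n+1)` of them. The neighbours of such a coloring in the coloring graph are obtained
by recoloring one of the `n` vertices with one of the `k - n` unused colors, so the coloring graph
is `n (k-n)`-regular, and the handshake lemma gives twice its number of edges as
`n (k-n) · k (k-1) ⋯ (k-n+1)`.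
-/

open Function

theorem Nat.cast_descFactorial_eq_prod_range {R : Type*} [CommRing R] (n k : ℕ) :
    (n.descFactorial k : R) = ∏ i ∈ range k, ((n : R) - i) := by
  rw [← descPochhammer_eval_eq_descFactorial, descPochhammer_eval_eq_prod_range]

theorem SimpleGraph.two_mul_card_edgeSet_of_card_neighborSet {V : Type*} [Finite V]
    (G : SimpleGraph V) {d : ℕ} (h : ∀ v, Nat.card (G.neighborSet v) = d) :
    2 * Nat.card G.edgeSet = Nat.card V * d := by
  classical
  have := Fintype.ofFinite V
  rw [Nat.card_eq_fintype_card, ← edgeFinset_card, ← sum_degrees_eq_twice_card_edges,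
    Nat.card_eq_fintype_card]
  simp [← card_neighborSet_eq_degree, ← Nat.card_eq_fintype_card, h]

theorem Function.Injective.ne_and_injective_update_iff {α β : Type*} [DecidableEq α]
    {c : α → β} (hc : Injective c) {v : α} {b : β} :
    b ≠ c v ∧ Injective (update c v b) ↔ b ∉ Set.range c := by
  constructor
  · rintro ⟨hbv, hinj⟩ ⟨w, rfl⟩
    have hwv : w ≠ v := by rintro rfl; exact hbv rfl
    exact hwv (hinj (by simp [hwv])).symm
  · intro hb
    refine ⟨fun h => hb ⟨v, h.symm⟩, fun u w huw => ?_⟩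
    by_cases hu : u = v <;> by_cases hw : w = v
    · rw [hu, hw]
    · rw [hu, update_self, update_of_ne hw] at huw
      exact absurd ⟨w, huw.symm⟩ hb
    · rw [hw, update_self, update_of_ne hu] at huw
      exact absurd ⟨u, huw⟩ hb
    · rw [update_of_ne hu, update_of_ne hw] at huw
      exact hc huw

section ColoringGraph

variable {V : Type*} {k : ℕ}

theorem isProperColoring_top_iff {c : V → Fin k} :
    IsProperColoring (⊤ : SimpleGraph V) c ↔ Injective c :=
  ⟨fun h _ _ huv => by_contra fun hne => h hne huv, fun h _ _ hne hc => hne (h hc)⟩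

theorem numColorings_top [Fintype V] :
    numColorings (⊤ : SimpleGraph V) k = k.descFactorial (Fintype.card V) := by
  let e : {c : V → Fin k // IsProperColoring ⊤ c} ≃ (V ↪ Fin k) :=
    (Equiv.subtypeEquivRight fun _ => isProperColoring_top_iff).trans
      (Equiv.subtypeInjectiveEquivEmbedding V (Fin k))
  rw [numColorings, Nat.card_congr e, Nat.card_eq_fintype_card, Fintype.card_embedding_eq,
    Fintype.card_fin]

variable [DecidableEq V] {G : SimpleGraph V}

def recolor (c : {c : V → Fin k // IsProperColoring G c})
    (p : {p : V × Fin k // p.2 ≠ c.1 p.1 ∧ IsProperColoring G (update c.1 p.1 p.2)}) :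
    (ColGraph G k).neighborSet c :=
  ⟨⟨update c.1 p.1.1 p.1.2, p.2.2⟩, p.1.1, by simpa using p.2.1.symm,
    fun w hw => by_contra fun hwv => hw (by simp [hwv])⟩

theorem bijective_recolor (c : {c : V → Fin k // IsProperColoring G c}) :
    Bijective (recolor c) := by
  constructor
  · rintro ⟨⟨v, a⟩, ha, _⟩ ⟨⟨w, b⟩, _⟩ h
    have hupd : update c.1 v a = update c.1 w b :=
      congrArg (fun d : (ColGraph G k).neighborSet c => d.1.1) h
    have hvw : v = w := by
      by_contra hvw
      exact ha (by simpa [hvw] using congrFun hupd v)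
    subst hvw
    simpa using congrFun hupd v
  · rintro ⟨d, v, hv, huniq⟩
    have hagree : ∀ w, w ≠ v → c.1 w = d.1 w :=
      fun w hwv => by_contra fun h => hwv (huniq w h)
    have hd : update c.1 v (d.1 v) = d.1 := by
      funext w
      rcases eq_or_ne w v with rfl | hwv
      · simp
      · simp [hwv, hagree w hwv]
    refine ⟨⟨(v, d.1 v), Ne.symm hv, by rw [hd]; exact d.2⟩, ?_⟩
    ext : 2
    exact hd

theorem card_neighborSet_colGraph (c : {c : V → Fin k // IsProperColoring G c}) :
    Nat.card ((ColGraph G k).neighborSet c) =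
      Nat.card {p : V × Fin k // p.2 ≠ c.1 p.1 ∧ IsProperColoring G (update c.1 p.1 p.2)} :=
  (Nat.card_congr (Equiv.ofBijective _ (bijective_recolor c))).symm

theorem card_neighborSet_colGraph_top [Fintype V]
    (c : {c : V → Fin k // IsProperColoring (⊤ : SimpleGraph V) c}) :
    Nat.card ((ColGraph ⊤ k).neighborSet c) = Fintype.card V * (k - Fintype.card V) := by
  have hc := isProperColoring_top_iff.1 c.2
  simp only [card_neighborSet_colGraph, isProperColoring_top_iff, hc.ne_and_injective_update_iff]
  let e : {p : V × Fin k // p.2 ∉ Set.range c.1} ≃ V × ↥(Set.range c.1)ᶜ :=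
    ⟨fun p => (p.1.1, ⟨p.1.2, p.2⟩), fun q => ⟨(q.1, q.2.1), q.2.2⟩,
      fun _ => rfl, fun _ => rfl⟩
  rw [Nat.card_congr e, Nat.card_eq_fintype_card, Fintype.card_prod, Fintype.card_compl_set,
    Set.card_range_of_injective hc, Fintype.card_fin]

theorem two_mul_numEdges_top [Fintype V] :
    2 * numEdges (⊤ : SimpleGraph V) k =
      Fintype.card V * k.descFactorial (Fintype.card V + 1) := by
  rw [numEdges, two_mul_card_edgeSet_of_card_neighborSet _ card_neighborSet_colGraph_top,
    ← numColorings, numColorings_top, Nat.descFactorial_succ]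
  ring

end ColoringGraph

theorem numEdges_completeGraph_general (n : ℕ) (k : ℕ) :
    (2 * numEdges (⊤ : SimpleGraph (Fin n)) k : ℤ) =
      n * ∏ i ∈ Finset.range (n + 1), ((k : ℤ) - i) := by
  rw [← Nat.cast_descFactorial_eq_prod_range]
  exact_mod_cast (two_mul_numEdges_top (V := Fin n)).trans (by rw [Fintype.card_fin])

/-- the chromatic pairs polynomial of the complete graph `K_n`. -/
theorem numEdges_completeGraph (n : ℕ) (hn : 1 ≤ n) (k : ℕ) :
    (2 * numEdges (⊤ : SimpleGraph (Fin n)) k : ℤ) =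
      n * ∏ i ∈ Finset.range (n + 1), ((k : ℤ) - i) :=
  numEdges_completeGraph_general n k
end

section
/- Let T be a tree on n vertices. Then for every natural number k, the number of edges of the k-coloring graph C_k(T) equals C(k,2) · Σ_{v ∈ V(T)} (k−2)^{deg(v)} (k−1)^{n−deg(v)−1}, where the equality is taken in the integers and deg(v) is the degree of v in T. -/
open SimpleGraph Finset

section Aux
set_option linter.unusedSectionVars false

universe u

lemma card_eq_sum_fibers {A : Type*} {B : Type*} [Finite A] [Fintype B] (f : A → B) :
    Nat.card A = ∑ b : B, Nat.card {a : A // f a = b} := by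
  classical
  letI : Fintype A := Fintype.ofFinite A
  rw [Nat.card_eq_fintype_card,
    Fintype.card_congr (Equiv.sigmaFiberEquiv f).symm, Fintype.card_sigma]
  simp [Nat.card_eq_fintype_card]

lemma card_eq_fibers_const {A : Type*} {B : Type*} [Finite A] [Finite B] (f : A → B)
    {m : ℕ} (h : ∀ b, Nat.card {a : A // f a = b} = m) :
    Nat.card A = Nat.card B * m := by
  classical
  letI : Fintype B := Fintype.ofFinite B
  rw [card_eq_sum_fibers f]
  simp [h, Nat.card_eq_fintype_card, Finset.sum_const, mul_comm]

lemma card_ne_fin (k : ℕ) (a : Fin k) : Nat.card {x : Fin k // x ≠ a} = k - 1 := by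
  classical
  rw [Nat.card_eq_fintype_card, Fintype.card_subtype]
  rw [show (Finset.univ.filter fun x : Fin k => x ≠ a) = Finset.univ.erase a by
    ext x; simp [Finset.mem_erase]]
  simp [Finset.card_erase_of_mem]

lemma card_ne_ne_fin (k : ℕ) {a b : Fin k} (hab : a ≠ b) :
    Nat.card {x : Fin k // x ≠ a ∧ x ≠ b} = k - 2 := by
  classical
  rw [Nat.card_eq_fintype_card, Fintype.card_subtype]
  rw [show (Finset.univ.filter fun x : Fin k => x ≠ a ∧ x ≠ b)
      = (Finset.univ.erase a).erase b by
    ext x; simp [Finset.mem_erase]; tauto]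
  rw [Finset.card_erase_of_mem (by simp [Finset.mem_erase, Ne.symm hab]),
    Finset.card_erase_of_mem (by simp)]
  simp [Nat.sub_sub]

lemma card_pairs_ne (k : ℕ) : Nat.card {q : Fin k × Fin k // q.1 ≠ q.2} = k * (k - 1) := by
  have h := card_eq_fibers_const (fun q : {q : Fin k × Fin k // q.1 ≠ q.2} => q.1.1)
    (m := k - 1) ?_
  · simpa [Nat.card_eq_fintype_card] using h
  · intro b
    rw [← card_ne_fin k b]
    apply Nat.card_congr
    refine ⟨fun p => ⟨p.1.1.2, ?_⟩,
      fun y => ⟨⟨(b, y.1), Ne.symm y.2⟩, rfl⟩, ?_, ?_⟩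
    · have hx : p.1.1.1 = b := p.2
      have h2 := p.1.2
      rw [hx] at h2
      exact Ne.symm h2
    · rintro ⟨⟨⟨x, y⟩, h⟩, hb⟩
      simp only at hb
      subst hb
      rfl
    · intro y; rfl

lemma card_pairs_ne_avoid (k : ℕ) (a : Fin k) :
    Nat.card {q : Fin k × Fin k // q.1 ≠ q.2 ∧ q.1 ≠ a ∧ q.2 ≠ a} = (k - 1) * (k - 2) := by
  have h := card_eq_fibers_const
    (fun q : {q : Fin k × Fin k // q.1 ≠ q.2 ∧ q.1 ≠ a ∧ q.2 ≠ a} =>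
      (⟨q.1.1, q.2.2.1⟩ : {x : Fin k // x ≠ a}))
    (m := k - 2) ?_
  · rwa [card_ne_fin k a] at h
  · intro b
    rw [← card_ne_ne_fin k b.2]
    apply Nat.card_congr
    refine ⟨fun p => ⟨p.1.1.2, ?_, p.1.2.2.2⟩,
      fun y => ⟨⟨(b.1, y.1), Ne.symm y.2.1, b.2, y.2.2⟩, Subtype.ext rfl⟩, ?_, ?_⟩
    · have hx : p.1.1.1 = b.1 := congrArg Subtype.val p.2
      have h2 := p.1.2.1
      rw [hx] at h2
      exact Ne.symm h2
    · rintro ⟨⟨⟨x, y⟩, h1, h2, h3⟩, hb⟩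
      have hx : x = b.1 := congrArg Subtype.val hb
      subst hx
      rfl
    · intro y; rfl

section TreeLemmas
variable {V : Type u} [Fintype V] [DecidableEq V] {T : SimpleGraph V} [DecidableRel T.Adj]

lemma exists_leaf (hT : T.IsTree) (h2 : 2 ≤ Fintype.card V) : ∃ u : V, T.degree u = 1 := by
  classical
  by_contra hno
  push_neg at hno
  have hpos : ∀ v : V, 0 < T.degree v := by
    intro v
    obtain ⟨y, hy⟩ := Fintype.exists_ne_of_one_lt_card (by omega) v
    obtain ⟨p⟩ := hT.isConnected.preconnected v y
    have hnil : ¬ p.Nil := SimpleGraph.Walk.not_nil_of_ne (Ne.symm hy)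
    exact (T.degree_pos_iff_exists_adj v).2 ⟨_, SimpleGraph.Walk.adj_snd hnil⟩
  have hge : ∀ v : V, 2 ≤ T.degree v := by
    intro v
    have := hpos v
    have := hno v
    omega
  have hsum : ∑ v : V, T.degree v = 2 * T.edgeFinset.card :=
    T.sum_degrees_eq_twice_card_edges
  have hcard : T.edgeFinset.card + 1 = Fintype.card V := hT.card_edgeFinset
  have hle : ∑ v : V, 2 ≤ ∑ v : V, T.degree v := Finset.sum_le_sum fun v _ => hge v
  rw [Finset.sum_const, smul_eq_mul, Finset.card_univ] at hle
  omega

lemma degree_one_unique_nbr {u : V} (h : T.degree u = 1) :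
    ∃ w : V, T.Adj u w ∧ ∀ x : V, T.Adj u x → x = w := by
  obtain ⟨w, hw⟩ := Finset.card_eq_one.1 h
  refine ⟨w, ?_, ?_⟩
  · have : w ∈ T.neighborFinset u := hw ▸ Finset.mem_singleton_self w
    exact (T.mem_neighborFinset u w).1 this
  · intro x hx
    have : x ∈ T.neighborFinset u := (T.mem_neighborFinset u x).2 hx
    rw [hw, Finset.mem_singleton] at this
    exact this

lemma leaf_not_mem_path_support {u w : V} (hadj : T.Adj u w)
    (huniq : ∀ x : V, T.Adj u x → x = w) :
    ∀ {a b : V} (p : T.Walk a b), p.IsPath → a ≠ u → b ≠ u → u ∉ p.support := by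
  intro a b p
  induction p with
  | nil =>
    intro _ ha _
    simp [Ne.symm ha]
  | @cons x c y hac q ih =>
    intro hp ha hb
    rw [SimpleGraph.Walk.support_cons, List.mem_cons]
    push_neg
    have hq : q.IsPath := hp.of_cons
    have hanotin : x ∉ q.support := ((SimpleGraph.Walk.cons_isPath_iff hac q).1 hp).2
    have hc : c ≠ u := by
      intro hcu
      subst hcu
      have haw : x = w := huniq x hac.symm
      have hnil : ¬ q.Nil := SimpleGraph.Walk.not_nil_of_ne (Ne.symm hb)
      have hsnd : q.getVert 1 = w := huniq _ (SimpleGraph.Walk.adj_snd hnil)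
      have hlen : 1 ≤ q.length := by
        rw [SimpleGraph.Walk.not_nil_iff_lt_length] at hnil
        omega
      have hmem : q.getVert 1 ∈ q.support :=
        SimpleGraph.Walk.mem_support_iff_exists_getVert.2 ⟨1, rfl, hlen⟩
      rw [hsnd, ← haw] at hmem
      exact hanotin hmem
    exact ⟨Ne.symm ha, ih hq hc hb⟩

lemma reachable_induce_of_support {s : Set V} :
    ∀ {a b : V} (p : T.Walk a b) (_ : ∀ x ∈ p.support, x ∈ s) (ha : a ∈ s) (hb : b ∈ s),
      (T.induce s).Reachable ⟨a, ha⟩ ⟨b, hb⟩ := by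
  intro a b p
  induction p with
  | nil => intro _ ha hb; rfl
  | @cons a c b hac q ih =>
    intro hs ha hb
    have hc : c ∈ s := hs c (by simp [SimpleGraph.Walk.support_cons])
    have step : (T.induce s).Adj ⟨a, ha⟩ ⟨c, hc⟩ := by
      simp only [SimpleGraph.comap_adj, Function.Embedding.coe_subtype]
      exact hac
    exact step.reachable.trans
      (ih (fun x hx => hs x (by simp [SimpleGraph.Walk.support_cons, hx])) hc hb)

lemma isTree_del (hT : T.IsTree) {u w : V} (hadj : T.Adj u w)
    (huniq : ∀ x : V, T.Adj u x → x = w) :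
    (T.induce {x : V | x ≠ u}).IsTree := by
  constructor
  · have hne : Nonempty ↥{x : V | x ≠ u} := ⟨⟨w, hadj.ne'⟩⟩
    rw [SimpleGraph.connected_iff]
    refine ⟨?_, hne⟩
    rintro ⟨a, ha⟩ ⟨b, hb⟩
    obtain ⟨p, hp⟩ := (hT.existsUnique_path a b).exists
    have hnot : u ∉ p.support := leaf_not_mem_path_support hadj huniq p hp ha hb
    exact reachable_induce_of_support p
      (fun x hx => show x ≠ u from fun hxu => hnot (hxu ▸ hx)) ha hb
  · intro v c hc
    have hmapped := hc.map (f := (SimpleGraph.Embedding.induce (G := T) {x : V | x ≠ u}).toHom)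
      (by exact Subtype.val_injective)
    exact hT.IsAcyclic _ hmapped

instance instDecInduce {s : Set V} : DecidableRel (T.induce s).Adj :=
  fun a b => inferInstanceAs (Decidable (T.Adj a b))

lemma neighborFinset_del_card (u : V) {a : V} (ha : a ≠ u) :
    ((T.induce {x : V | x ≠ u}).neighborFinset ⟨a, ha⟩).card
      = ((T.neighborFinset a).erase u).card := by
  apply Finset.card_bij (fun x _ => x.1)
  · intro x hx
    rw [SimpleGraph.mem_neighborFinset] at hx
    rw [Finset.mem_erase, SimpleGraph.mem_neighborFinset]
    exact ⟨x.2, by simpa using hx⟩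
  · intro x _ y _ h
    exact Subtype.ext h
  · intro y hy
    rw [Finset.mem_erase, SimpleGraph.mem_neighborFinset] at hy
    refine ⟨⟨y, hy.1⟩, ?_, rfl⟩
    rw [SimpleGraph.mem_neighborFinset]
    show T.Adj a y
    exact hy.2

lemma degree_del_of_adj {u a : V} (ha : a ≠ u) (h : T.Adj a u) :
    (T.induce {x : V | x ≠ u}).degree ⟨a, ha⟩ = T.degree a - 1 := by
  rw [SimpleGraph.degree, neighborFinset_del_card u ha,
    Finset.card_erase_of_mem ((T.mem_neighborFinset a u).2 h)]
  rfl

lemma degree_del_of_not_adj {u a : V} (ha : a ≠ u) (h : ¬ T.Adj a u) :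
    (T.induce {x : V | x ≠ u}).degree ⟨a, ha⟩ = T.degree a := by
  rw [SimpleGraph.degree, neighborFinset_del_card u ha,
    Finset.erase_eq_of_notMem (fun hmem => h ((T.mem_neighborFinset a u).1 hmem))]
  rfl

end TreeLemmas

section ColorStep
set_option linter.unusedSectionVars false
variable {V : Type u} [Fintype V] [DecidableEq V] {T : SimpleGraph V} [DecidableRel T.Adj]

lemma card_subtype_ne (u : V) : Fintype.card ↥{x : V | x ≠ u} = Fintype.card V - 1 := by
  classical
  rw [Fintype.card_subtype]
  rw [show (Finset.univ.filter fun x : V => x ∈ {x : V | x ≠ u}) = Finset.univ.erase u by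
    ext x; simp [Finset.mem_erase]]
  simp [Finset.card_erase_of_mem]

/-- restriction of a proper coloring to the complement of a vertex -/
lemma isProper_restrict {k : ℕ} (u : V) {c : V → Fin k} (hc : IsProperColoring T c) :
    IsProperColoring (T.induce {x : V | x ≠ u}) (fun z => c z.1) :=
  fun _ _ hz => hc (by simpa using hz)

lemma isProper_extend {k : ℕ} {u w : V} (hadj : T.Adj u w)
    (huniq : ∀ x : V, T.Adj u x → x = w)
    {c' : ↥{x : V | x ≠ u} → Fin k}
    (hc' : IsProperColoring (T.induce {x : V | x ≠ u}) c')
    {x : Fin k} (hx : x ≠ c' ⟨w, hadj.ne'⟩) :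
    IsProperColoring T (fun z => if h : z ≠ u then c' ⟨z, h⟩ else x) := by
  intro z₁ z₂ hz
  show (if h : z₁ ≠ u then c' ⟨z₁, h⟩ else x) ≠ (if h : z₂ ≠ u then c' ⟨z₂, h⟩ else x)
  by_cases h1 : z₁ = u
  · subst h1
    have h2 : z₂ = w := huniq _ hz
    subst h2
    rw [dif_neg (not_not_intro rfl), dif_pos hadj.ne']
    exact hx
  · by_cases h2 : z₂ = u
    · subst h2
      have h1w : z₁ = w := huniq _ hz.symm
      subst h1w
      rw [dif_pos hadj.ne', dif_neg (not_not_intro rfl)]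
      exact Ne.symm hx
    · rw [dif_pos h1, dif_pos h2]
      exact hc' (by simpa using hz)

lemma colorings_step {k : ℕ} {u w : V} (hadj : T.Adj u w)
    (huniq : ∀ x : V, T.Adj u x → x = w) :
    Nat.card {c : V → Fin k // IsProperColoring T c}
      = Nat.card {c : ↥{x : V | x ≠ u} → Fin k //
          IsProperColoring (T.induce {x : V | x ≠ u}) c} * (k - 1) := by
  classical
  refine card_eq_fibers_const
    (f := fun c : {c : V → Fin k // IsProperColoring T c} =>
      (⟨fun z => c.1 z.1, isProper_restrict u c.2⟩ :
        {c' : ↥{x : V | x ≠ u} → Fin k //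
          IsProperColoring (T.induce {x : V | x ≠ u}) c'})) ?_
  intro c'
  rw [← card_ne_fin k (c'.1 ⟨w, hadj.ne'⟩)]
  apply Nat.card_congr
  refine ⟨fun p => ⟨p.1.1 u, ?_⟩,
    fun x => ⟨⟨fun z => if h : z ≠ u then c'.1 ⟨z, h⟩ else x.1,
      isProper_extend hadj huniq c'.2 x.2⟩, ?_⟩, ?_, ?_⟩
  · have hww : p.1.1 w = c'.1 ⟨w, hadj.ne'⟩ :=
      congrArg (fun d => d.1 ⟨w, hadj.ne'⟩) p.2
    rw [← hww]
    exact p.1.2 hadj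
  · apply Subtype.ext
    funext z
    show (if h : z.1 ≠ u then c'.1 ⟨z.1, h⟩ else x.1) = c'.1 z
    rw [dif_pos (show (z : V) ≠ u from z.2)]
  · intro p
    apply Subtype.ext
    apply Subtype.ext
    funext z
    show (if h : z ≠ u then c'.1 ⟨z, h⟩ else p.1.1 u) = p.1.1 z
    by_cases h : z = u
    · subst h; rw [dif_neg (not_not_intro rfl)]
    · rw [dif_pos h]
      exact (congrArg (fun d => d.1 ⟨z, h⟩) p.2).symm
  · intro x
    apply Subtype.ext
    show (if h : u ≠ u then c'.1 ⟨u, h⟩ else x.1) = x.1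
    rw [dif_neg (not_not_intro rfl)]

end ColorStep

section CountColorings
set_option linter.unusedSectionVars false

lemma card_colorings_tree (k : ℕ) :
    ∀ (n : ℕ) {V : Type u} [Fintype V] [DecidableEq V] (T : SimpleGraph V)
      [DecidableRel T.Adj], T.IsTree → Fintype.card V = n →
      Nat.card {c : V → Fin k // IsProperColoring T c} = k * (k - 1) ^ (n - 1) := by
  intro n
  induction n using Nat.strong_induction_on with
  | _ n ih =>
    intro V _ _ T _ hT hn
    subst hn
    haveI : Nonempty V := hT.isConnected.nonempty
    have hpos : 1 ≤ Fintype.card V := Fintype.card_pos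
    by_cases h1 : Fintype.card V = 1
    · obtain ⟨v₀, hv₀⟩ := Fintype.card_eq_one_iff.1 h1
      have he : Nat.card {c : V → Fin k // IsProperColoring T c} = Nat.card (Fin k) := by
        apply Nat.card_congr
        refine ⟨fun c => c.1 v₀,
          fun x => ⟨fun _ => x,
            fun a b hab => absurd ((hv₀ a).trans (hv₀ b).symm) hab.ne⟩, ?_, ?_⟩
        · intro c
          apply Subtype.ext
          funext z
          show c.1 v₀ = c.1 z
          rw [hv₀ z]
        · intro x; rfl
      rw [he, Nat.card_eq_fintype_card, Fintype.card_fin, h1]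
      simp
    · have h2 : 2 ≤ Fintype.card V := by omega
      obtain ⟨u, hu⟩ := exists_leaf hT h2
      obtain ⟨w, hadj, huniq⟩ := degree_one_unique_nbr hu
      have htree' := isTree_del hT hadj huniq
      have hcard' : Fintype.card ↥{x : V | x ≠ u} = Fintype.card V - 1 :=
        card_subtype_ne u
      rw [colorings_step hadj huniq,
        ih (Fintype.card V - 1) (by omega) (T.induce {x : V | x ≠ u}) htree' hcard',
        mul_assoc, ← pow_succ,
        show Fintype.card V - 1 - 1 + 1 = Fintype.card V - 1 by omega]

end CountColorings

section Pairs
set_option linter.unusedSectionVars false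

/-- pairs of proper colorings differing exactly at `v` -/
def PairsAt {V : Type u} (T : SimpleGraph V) (k : ℕ) (v : V) : Type u :=
  {p : (V → Fin k) × (V → Fin k) // IsProperColoring T p.1 ∧ IsProperColoring T p.2 ∧
    p.1 v ≠ p.2 v ∧ ∀ z : V, z ≠ v → p.1 z = p.2 z}

instance {V : Type u} [Finite V] (T : SimpleGraph V) (k : ℕ) (v : V) :
    Finite (PairsAt T k v) := by
  unfold PairsAt; infer_instance

lemma card_ne_same (k : ℕ) {a b : Fin k} (hab : a = b) :
    Nat.card {x : Fin k // x ≠ a ∧ x ≠ b} = k - 1 := by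
  subst hab
  rw [← card_ne_fin k a]
  exact Nat.card_congr ⟨fun x => ⟨x.1, x.2.1⟩, fun x => ⟨x.1, x.2, x.2⟩,
    fun x => rfl, fun x => rfl⟩

variable {V : Type u} [Fintype V] [DecidableEq V] {T : SimpleGraph V} [DecidableRel T.Adj]

lemma pairs_step_at_leaf (k : ℕ) {u w : V} (hadj : T.Adj u w)
    (huniq : ∀ x : V, T.Adj u x → x = w) :
    Nat.card (PairsAt T k u)
      = Nat.card {c : ↥{x : V | x ≠ u} → Fin k //
          IsProperColoring (T.induce {x : V | x ≠ u}) c} * ((k - 1) * (k - 2)) := by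
  classical
  refine card_eq_fibers_const
    (f := fun p : PairsAt T k u =>
      (⟨fun z => p.1.1 z.1, isProper_restrict u p.2.1⟩ :
        {c : ↥{x : V | x ≠ u} → Fin k //
          IsProperColoring (T.induce {x : V | x ≠ u}) c})) ?_
  intro c'
  rw [← card_pairs_ne_avoid k (c'.1 ⟨w, hadj.ne'⟩)]
  apply Nat.card_congr
  refine ⟨fun p => ⟨(p.1.1.1 u, p.1.1.2 u), p.1.2.2.2.1, ?_, ?_⟩,
    fun q => ⟨⟨((fun z => if h : z ≠ u then c'.1 ⟨z, h⟩ else q.1.1),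
                (fun z => if h : z ≠ u then c'.1 ⟨z, h⟩ else q.1.2)),
      isProper_extend hadj huniq c'.2 q.2.2.1,
      isProper_extend hadj huniq c'.2 q.2.2.2, ?_, ?_⟩, ?_⟩, ?_, ?_⟩
  · have hww : p.1.1.1 w = c'.1 ⟨w, hadj.ne'⟩ :=
      congrArg (fun d => d.1 ⟨w, hadj.ne'⟩) p.2
    rw [← hww]
    exact p.1.2.1 hadj
  · have hww : p.1.1.1 w = c'.1 ⟨w, hadj.ne'⟩ :=
      congrArg (fun d => d.1 ⟨w, hadj.ne'⟩) p.2
    have hdw : p.1.1.1 w = p.1.1.2 w := p.1.2.2.2.2 w hadj.ne'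
    rw [← hww, hdw]
    exact p.1.2.2.1 hadj
  · show (if h : u ≠ u then c'.1 ⟨u, h⟩ else q.1.1)
        ≠ (if h : u ≠ u then c'.1 ⟨u, h⟩ else q.1.2)
    rw [dif_neg (not_not_intro rfl), dif_neg (not_not_intro rfl)]
    exact q.2.1
  · intro z hz
    show (if h : z ≠ u then c'.1 ⟨z, h⟩ else q.1.1)
        = (if h : z ≠ u then c'.1 ⟨z, h⟩ else q.1.2)
    rw [dif_pos hz, dif_pos hz]
  · apply Subtype.ext
    funext z
    show (if h : z.1 ≠ u then c'.1 ⟨z.1, h⟩ else q.1.1) = c'.1 z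
    rw [dif_pos (show (z : V) ≠ u from z.2)]
  · rintro ⟨⟨⟨c, d⟩, hc, hd, hne, hagr⟩, hfib⟩
    apply Subtype.ext
    apply Subtype.ext
    dsimp only
    congr 1
    · funext z
      show (if h : z ≠ u then c'.1 ⟨z, h⟩ else c u) = c z
      by_cases h : z = u
      · subst h; rw [dif_neg (not_not_intro rfl)]
      · rw [dif_pos h]
        exact (congrArg (fun r => r.1 ⟨z, h⟩) hfib).symm
    · funext z
      show (if h : z ≠ u then c'.1 ⟨z, h⟩ else d u) = d z
      by_cases h : z = u
      · subst h; rw [dif_neg (not_not_intro rfl)]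
      · rw [dif_pos h]
        refine ((congrArg (fun r => r.1 ⟨z, h⟩) hfib).symm).trans (hagr z h)
  · intro q
    apply Subtype.ext
    show ((if h : u ≠ u then c'.1 ⟨u, h⟩ else q.1.1),
          (if h : u ≠ u then c'.1 ⟨u, h⟩ else q.1.2)) = q.1
    rw [dif_neg (not_not_intro rfl), dif_neg (not_not_intro rfl)]

lemma pairs_step_off_leaf (k : ℕ) {u w v : V} (hadj : T.Adj u w)
    (huniq : ∀ x : V, T.Adj u x → x = w) (hvu : v ≠ u) {m : ℕ}
    (hm : ∀ q : PairsAt (T.induce {x : V | x ≠ u}) k ⟨v, hvu⟩,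
      Nat.card {x : Fin k // x ≠ q.1.1 ⟨w, hadj.ne'⟩ ∧ x ≠ q.1.2 ⟨w, hadj.ne'⟩} = m) :
    Nat.card (PairsAt T k v)
      = Nat.card (PairsAt (T.induce {x : V | x ≠ u}) k ⟨v, hvu⟩) * m := by
  classical
  refine card_eq_fibers_const
    (f := fun p : PairsAt T k v =>
      (⟨((fun z => p.1.1 z.1), (fun z => p.1.2 z.1)),
        isProper_restrict u p.2.1, isProper_restrict u p.2.2.1,
        p.2.2.2.1, fun z hz => p.2.2.2.2 z.1 (fun h => hz (Subtype.ext h))⟩ :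
        PairsAt (T.induce {x : V | x ≠ u}) k ⟨v, hvu⟩)) ?_
  intro q
  rw [← hm q]
  apply Nat.card_congr
  refine ⟨fun p => ⟨p.1.1.1 u, ?_, ?_⟩,
    fun x => ⟨⟨((fun z => if h : z ≠ u then q.1.1 ⟨z, h⟩ else x.1),
                (fun z => if h : z ≠ u then q.1.2 ⟨z, h⟩ else x.1)),
      isProper_extend hadj huniq q.2.1 x.2.1,
      isProper_extend hadj huniq q.2.2.1 x.2.2, ?_, ?_⟩, ?_⟩, ?_, ?_⟩
  · have hww : p.1.1.1 w = q.1.1 ⟨w, hadj.ne'⟩ :=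
      congrArg (fun r => r.1.1 ⟨w, hadj.ne'⟩) p.2
    rw [← hww]
    exact p.1.2.1 hadj
  · have hww : p.1.1.2 w = q.1.2 ⟨w, hadj.ne'⟩ :=
      congrArg (fun r => r.1.2 ⟨w, hadj.ne'⟩) p.2
    have hu12 : p.1.1.1 u = p.1.1.2 u := p.1.2.2.2.2 u (Ne.symm hvu)
    rw [← hww, hu12]
    exact p.1.2.2.1 hadj
  · show (if h : v ≠ u then q.1.1 ⟨v, h⟩ else x.1)
        ≠ (if h : v ≠ u then q.1.2 ⟨v, h⟩ else x.1)
    rw [dif_pos hvu, dif_pos hvu]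
    exact q.2.2.2.1
  · intro z hz
    show (if h : z ≠ u then q.1.1 ⟨z, h⟩ else x.1)
        = (if h : z ≠ u then q.1.2 ⟨z, h⟩ else x.1)
    by_cases h : z = u
    · subst h; rw [dif_neg (not_not_intro rfl), dif_neg (not_not_intro rfl)]
    · rw [dif_pos h, dif_pos h]
      exact q.2.2.2.2 ⟨z, h⟩ (fun hh => hz (congrArg Subtype.val hh))
  · apply Subtype.ext
    dsimp only
    congr 1
    · funext z
      show (if h : z.1 ≠ u then q.1.1 ⟨z.1, h⟩ else x.1) = q.1.1 z
      rw [dif_pos (show (z : V) ≠ u from z.2)]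
    · funext z
      show (if h : z.1 ≠ u then q.1.2 ⟨z.1, h⟩ else x.1) = q.1.2 z
      rw [dif_pos (show (z : V) ≠ u from z.2)]
  · rintro ⟨⟨⟨c, d⟩, hc, hd, hne, hagr⟩, hfib⟩
    apply Subtype.ext
    apply Subtype.ext
    dsimp only
    have hcu : c u = d u := hagr u (Ne.symm hvu)
    congr 1
    · funext z
      show (if h : z ≠ u then q.1.1 ⟨z, h⟩ else c u) = c z
      by_cases h : z = u
      · subst h; rw [dif_neg (not_not_intro rfl)]
      · rw [dif_pos h]
        exact (congrArg (fun r => r.1.1 ⟨z, h⟩) hfib).symm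
    · funext z
      show (if h : z ≠ u then q.1.2 ⟨z, h⟩ else c u) = d z
      by_cases h : z = u
      · subst h; rw [dif_neg (not_not_intro rfl)]; exact hcu
      · rw [dif_pos h]
        exact (congrArg (fun r => r.1.2 ⟨z, h⟩) hfib).symm
  · intro x
    apply Subtype.ext
    show (if h : u ≠ u then q.1.1 ⟨u, h⟩ else x.1) = x.1
    rw [dif_neg (not_not_intro rfl)]

end Pairs

section PairsCount
set_option linter.unusedSectionVars false

lemma pairsAt_base (k : ℕ) {V : Type u} [Fintype V] [DecidableEq V]
    (T : SimpleGraph V) [DecidableRel T.Adj] (h1 : Fintype.card V = 1) (v : V) :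
    Nat.card (PairsAt T k v) = k * (k - 1) := by
  obtain ⟨v₀, hv₀⟩ := Fintype.card_eq_one_iff.1 h1
  have hall : ∀ z : V, z = v := fun z => (hv₀ z).trans (hv₀ v).symm
  rw [← card_pairs_ne k]
  apply Nat.card_congr
  refine ⟨fun p => ⟨(p.1.1 v, p.1.2 v), p.2.2.2.1⟩,
    fun q => ⟨((fun _ => q.1.1), (fun _ => q.1.2)),
      fun a b hab => absurd ((hall a).trans (hall b).symm) hab.ne,
      fun a b hab => absurd ((hall a).trans (hall b).symm) hab.ne,
      q.2, fun z hz => absurd (hall z) hz⟩, ?_, ?_⟩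
  · intro p
    apply Subtype.ext
    dsimp only
    congr 1
    · funext z; show p.1.1 v = p.1.1 z; rw [hall z]
    · funext z; show p.1.2 v = p.1.2 z; rw [hall z]
  · intro q; rfl

lemma card_pairsAt_tree (k : ℕ) (hk : 2 ≤ k) :
    ∀ (n : ℕ) {V : Type u} [Fintype V] [DecidableEq V] (T : SimpleGraph V)
      [DecidableRel T.Adj], T.IsTree → Fintype.card V = n → ∀ v : V,
      Nat.card (PairsAt T k v)
        = k * (k - 1) * ((k - 2) ^ T.degree v * (k - 1) ^ (n - 1 - T.degree v)) := by
  intro n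
  induction n using Nat.strong_induction_on with
  | _ n ih =>
    intro V _ _ T _ hT hn v
    subst hn
    haveI : Nonempty V := hT.isConnected.nonempty
    have hpos : 1 ≤ Fintype.card V := Fintype.card_pos
    by_cases h1 : Fintype.card V = 1
    · haveI : Subsingleton V := Fintype.card_le_one_iff_subsingleton.1 (by omega)
      have hd : T.degree v = 0 := by
        by_contra h
        obtain ⟨y, hy⟩ := (T.degree_pos_iff_exists_adj v).1 (Nat.pos_of_ne_zero h)
        exact hy.ne (Subsingleton.elim v y)
      rw [pairsAt_base k T h1 v, hd, h1]
      simp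
    · have h2 : 2 ≤ Fintype.card V := by omega
      obtain ⟨u, hu⟩ := exists_leaf hT h2
      obtain ⟨w, hadj, huniq⟩ := degree_one_unique_nbr hu
      have htree' := isTree_del hT hadj huniq
      have hcard' : Fintype.card ↥{x : V | x ≠ u} = Fintype.card V - 1 :=
        card_subtype_ne u
      by_cases hvu : v = u
      · subst hvu
        rw [pairs_step_at_leaf k hadj huniq,
          card_colorings_tree k (Fintype.card V - 1) (T.induce {x : V | x ≠ v})
            htree' hcard', hu, pow_one]
        ring
      · by_cases hwv : w = v
        · have hadj_vu : T.Adj v u := by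
            subst hwv; exact hadj.symm
          have hdpos : 0 < T.degree v := (T.degree_pos_iff_exists_adj v).2 ⟨u, hadj_vu⟩
          have hdlt : T.degree v < Fintype.card V := T.degree_lt_card_verts v
          have hdeg' : (T.induce {x : V | x ≠ u}).degree ⟨v, hvu⟩ = T.degree v - 1 :=
            degree_del_of_adj hvu hadj_vu
          rw [pairs_step_off_leaf k hadj huniq hvu (m := k - 2) (fun q => by
            subst hwv
            exact card_ne_ne_fin k q.2.2.2.1),
            ih (Fintype.card V - 1) (by omega) (T.induce {x : V | x ≠ u})
              htree' hcard' ⟨v, hvu⟩, hdeg']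
          rw [show Fintype.card V - 1 - 1 - (T.degree v - 1)
              = Fintype.card V - 1 - T.degree v by omega,
            show (k - 2) ^ T.degree v = (k - 2) ^ (T.degree v - 1) * (k - 2) by
              rw [← pow_succ]; congr 1; omega]
          ring
        · have hnadj : ¬ T.Adj v u := fun h => hwv (huniq v h.symm).symm
          have hdeg' : (T.induce {x : V | x ≠ u}).degree ⟨v, hvu⟩ = T.degree v :=
            degree_del_of_not_adj hvu hnadj
          have hdlt : T.degree v < Fintype.card V - 1 := by
            have := (T.induce {x : V | x ≠ u}).degree_lt_card_verts ⟨v, hvu⟩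
            rw [hdeg', hcard'] at this
            exact this
          rw [pairs_step_off_leaf k hadj huniq hvu (m := k - 1) (fun q => by
            exact card_ne_same k
              (q.2.2.2.2 ⟨w, hadj.ne'⟩ (fun hh => hwv (congrArg Subtype.val hh)))),
            ih (Fintype.card V - 1) (by omega) (T.induce {x : V | x ≠ u})
              htree' hcard' ⟨v, hvu⟩, hdeg']
          rw [show Fintype.card V - 1 - T.degree v
              = (Fintype.card V - 1 - 1 - T.degree v) + 1 by omega, pow_succ]
          ring

end PairsCount

section Assemble
set_option linter.unusedSectionVars false

lemma nat_card_sigma {B : Type*} [Fintype B] {F : B → Type*} [∀ b, Finite (F b)] :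
    Nat.card (Σ b, F b) = ∑ b, Nat.card (F b) := by
  classical
  letI : ∀ b, Fintype (F b) := fun b => Fintype.ofFinite _
  rw [Nat.card_eq_fintype_card, Fintype.card_sigma]
  simp [Nat.card_eq_fintype_card]

/-- package a pair differing at one vertex as a dart of the coloring graph -/
def pairsToDart {V : Type u} (T : SimpleGraph V) (k : ℕ)
    (a : Σ v : V, PairsAt T k v) : (ColGraph T k).Dart :=
  ⟨(⟨a.2.1.1, a.2.2.1⟩, ⟨a.2.1.2, a.2.2.2.1⟩),
   ⟨a.1, a.2.2.2.2.1,
     fun z hz => Classical.byContradiction fun hzv => hz (a.2.2.2.2.2 z hzv)⟩⟩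

lemma pairsToDart_bijective {V : Type u} (T : SimpleGraph V) (k : ℕ) :
    Function.Bijective (pairsToDart T k) := by
  constructor
  · rintro ⟨v, ⟨⟨c, d⟩, hc, hd, hne, hagr⟩⟩ ⟨v', ⟨⟨c', d'⟩, hc', hd', hne', hagr'⟩⟩ heq
    have h1 : c = c' := congrArg (fun t : (ColGraph T k).Dart => t.toProd.1.1) heq
    have h2 : d = d' := congrArg (fun t : (ColGraph T k).Dart => t.toProd.2.1) heq
    subst h1
    subst h2
    have hv : v = v' := by
      by_contra hvv
      exact hne (hagr' v hvv)
    subst hv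
    rfl
  · rintro ⟨⟨c, d⟩, hadj⟩
    obtain ⟨v, hv, huq⟩ := hadj
    exact ⟨⟨v, ⟨(c.1, d.1), c.2, d.2, hv,
      fun z hz => Classical.byContradiction fun h => hz (huq z h)⟩⟩, rfl⟩

lemma two_mul_numEdges {V : Type u} [Fintype V] (T : SimpleGraph V) (k : ℕ) :
    2 * numEdges T k = ∑ v : V, Nat.card (PairsAt T k v) := by
  classical
  letI : Fintype {c : V → Fin k // IsProperColoring T c} := Fintype.ofFinite _
  letI : DecidableEq {c : V → Fin k // IsProperColoring T c} := Classical.decEq _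
  letI : DecidableRel (ColGraph T k).Adj := Classical.decRel _
  have hdart : Nat.card (ColGraph T k).Dart = ∑ v : V, Nat.card (PairsAt T k v) := by
    rw [Nat.card_congr (Equiv.ofBijective _ (pairsToDart_bijective T k)).symm,
      nat_card_sigma]
  have hd2 : Fintype.card (ColGraph T k).Dart = 2 * (ColGraph T k).edgeFinset.card :=
    (ColGraph T k).dart_card_eq_twice_card_edges
  have hE : numEdges T k = (ColGraph T k).edgeFinset.card := by
    simp only [numEdges, Nat.card_eq_fintype_card, SimpleGraph.edgeFinset_card]
  rw [hE, ← hd2, ← Nat.card_eq_fintype_card, hdart]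

end Assemble

end Aux

/-- the chromatic pairs polynomial of a tree. -/
theorem numEdges_tree {V : Type*} [Fintype V] [DecidableEq V]
    (T : SimpleGraph V) [DecidableRel T.Adj] (hT : T.IsTree)
    (n : ℕ) (hn : Fintype.card V = n) (k : ℕ) :
    (numEdges T k : ℤ) = (Nat.choose k 2 : ℤ) *
      ∑ v : V, ((k : ℤ) - 2) ^ (T.degree v) * ((k : ℤ) - 1) ^ (n - T.degree v - 1) := by
    classical
  rcases lt_or_ge k 2 with hk | hk
  · -- degenerate case: fewer than two colors
    have hzero : numEdges T k = 0 := by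
      haveI : IsEmpty ↥(ColGraph T k).edgeSet := by
        constructor
        rintro ⟨e, he⟩
        induction e with
        | _ c d =>
          rw [SimpleGraph.mem_edgeSet] at he
          obtain ⟨z, hz, -⟩ := he
          haveI : Subsingleton (Fin k) := by
            interval_cases k <;> infer_instance
          exact hz (Subsingleton.elim _ _)
      simp only [numEdges, Nat.card_of_isEmpty]
    rw [hzero, Nat.choose_eq_zero_of_lt hk]
    simp
  · -- main case: at least two colors
    have key := card_pairsAt_tree k hk n T hT hn
    have h2 := two_mul_numEdges T k
    have hZ : (2 : ℤ) * (numEdges T k : ℤ)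
        = ∑ v : V, (k : ℤ) * ((k : ℤ) - 1) *
            (((k : ℤ) - 2) ^ T.degree v * ((k : ℤ) - 1) ^ (n - 1 - T.degree v)) := by
      have hcast := congrArg (Nat.cast : ℕ → ℤ) h2
      push_cast at hcast
      rw [hcast]
      apply Finset.sum_congr rfl
      intro v _
      rw [key v]
      have c1 : ((k - 1 : ℕ) : ℤ) = (k : ℤ) - 1 := by omega
      have c2 : ((k - 2 : ℕ) : ℤ) = (k : ℤ) - 2 := by omega
      push_cast [c1, c2]
      ring
    have hch : (2 : ℤ) * (Nat.choose k 2 : ℤ) = (k : ℤ) * ((k : ℤ) - 1) := by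
      obtain ⟨m, rfl⟩ : ∃ m, k = m + 1 := ⟨k - 1, by omega⟩
      have h' : (m + 1) * m = (m + 1).choose 2 * 2 := by
        have := Nat.add_one_mul_choose_eq m 1
        rwa [Nat.choose_one_right] at this
      have h'' := congrArg (Nat.cast : ℕ → ℤ) h'
      push_cast at h''
      push_cast
      ring_nf
      ring_nf at h''
      linarith [h'']
    have main2 : (2 : ℤ) * (numEdges T k : ℤ)
        = 2 * ((Nat.choose k 2 : ℤ) *
            ∑ v : V, ((k : ℤ) - 2) ^ T.degree v * ((k : ℤ) - 1) ^ (n - T.degree v - 1)) := by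
      rw [hZ, ← mul_assoc, hch, Finset.mul_sum]
      apply Finset.sum_congr rfl
      intro v _
      rw [Nat.sub_right_comm]
    exact mul_left_cancel₀ two_ne_zero main2
end

section
/- For every finite simple graph G and every natural number k, the k-coloring graph C_k(G) contains no induced subgraph isomorphic to the 5-cycle C_5; that is, for every 5-element subset S of vertices of C_k(G), the subgraph induced on S is not isomorphic to C_5. -/
open SimpleGraph Finset

private lemma core_dup_lemma {V : Type*} (a : Fin 5 → V) (hne : ∀ i : Fin 5, a i ≠ a (i + 1))
    (hdup : ∀ j : Fin 5, ∃ m : Fin 5, m ≠ j ∧ a m = a j) : False := by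
  have h5 : ∀ m : Fin 5, m = 0 ∨ m = 1 ∨ m = 2 ∨ m = 3 ∨ m = 4 := by decide
  have n0 : a 0 ≠ a 1 := by simpa using hne 0
  have n1 : a 1 ≠ a 2 := by simpa using hne 1
  have n2 : a 2 ≠ a 3 := by simpa using hne 2
  have n3 : a 3 ≠ a 4 := by simpa using hne 3
  have n4 : a 4 ≠ a 0 := by simpa using hne 4
  obtain ⟨m0, hm0, he0⟩ := hdup 0
  rcases h5 m0 with rfl | rfl | rfl | rfl | rfl
  · exact hm0 rfl
  · exact n0 he0.symm
  · -- he0 : a 2 = a 0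
    obtain ⟨m1, hm1, he1⟩ := hdup 3
    rcases h5 m1 with rfl | rfl | rfl | rfl | rfl
    · exact n2 (he0.trans he1)
    · -- he1 : a 1 = a 3
      obtain ⟨m2, hm2, he2⟩ := hdup 4
      rcases h5 m2 with rfl | rfl | rfl | rfl | rfl
      · exact n4 he2.symm
      · exact n3 (he1.symm.trans he2)
      · exact n4 ((he0.symm.trans he2).symm)
      · exact n3 he2
      · exact hm2 rfl
    · exact n2 he1
    · exact hm1 rfl
    · exact n3 he1.symm
  · -- he0 : a 3 = a 0
    obtain ⟨m1, hm1, he1⟩ := hdup 1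
    rcases h5 m1 with rfl | rfl | rfl | rfl | rfl
    · exact n0 he1
    · exact hm1 rfl
    · exact n1 he1.symm
    · exact n0 (he0.symm.trans he1)
    · -- he1 : a 4 = a 1
      obtain ⟨m2, hm2, he2⟩ := hdup 2
      rcases h5 m2 with rfl | rfl | rfl | rfl | rfl
      · exact n2 (he0.trans he2).symm
      · exact n1 he2
      · exact hm2 rfl
      · exact n2 he2.symm
      · exact n1 (he1.symm.trans he2)
  · exact n4 he0

/-- coloring graphs contain no induced 5-cycle. -/
theorem no_induced_five_cycle {V : Type*} [Fintype V] (G : SimpleGraph V) (k : ℕ)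
    (S : Set {c : V → Fin k // IsProperColoring G c}) :
    IsEmpty ((ColGraph G k).induce S ≃g SimpleGraph.cycleGraph 5) := by
  constructor
  intro φ
  set ψ := φ.symm with hψ
  set e : Fin 5 → (V → Fin k) := fun i => ((ψ i : {c : V → Fin k // IsProperColoring G c})).1
    with he
  have hadj : ∀ i j : Fin 5,
      (ColGraph G k).Adj (ψ i : {c : V → Fin k // IsProperColoring G c})
        (ψ j : {c : V → Fin k // IsProperColoring G c}) ↔ (cycleGraph 5).Adj i j := by
    intro i j
    exact ψ.map_adj_iff
  have c1 : ∀ i : Fin 5, (cycleGraph 5).Adj i (i + 1) := by decide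
  have c2 : ∀ i : Fin 5, ¬ (cycleGraph 5).Adj i (i + 2) := by decide
  have c3 : ∀ i : Fin 5, i ≠ i + 2 := by decide
  have hA : ∀ i : Fin 5, ∃ v, e i v ≠ e (i + 1) v ∧ ∀ w, e i w ≠ e (i + 1) w → w = v :=
    fun i => (hadj i (i + 1)).2 (c1 i)
  choose a h1 h2 using hA
  have hD : ∀ i : Fin 5, e i ≠ e (i + 2) := by
    intro i h
    exact c3 i (ψ.toEquiv.injective (Subtype.ext (Subtype.ext h)))
  -- no two consecutive change-vertices coincide
  have hne : ∀ i : Fin 5, a i ≠ a (i + 1) := by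
    intro i h
    apply c2 i
    rw [← hadj i (i + 2)]
    have uniq : ∀ w, e i w ≠ e (i + 2) w → w = a i := by
      intro w hw
      by_cases h01 : e i w = e (i + 1) w
      · have h12 : e (i + 1) w ≠ e (i + 2) w := fun h' => hw (h01.trans h')
        have : w = a (i + 1) := h2 (i + 1) w (by rwa [show i + 1 + 1 = i + 2 by rw [add_assoc]; rfl])
        rw [this, ← h]
      · exact h2 i w h01
    obtain ⟨w, hw⟩ := Function.ne_iff.mp (hD i)
    have hwa := uniq w hw
    exact ⟨a i, hwa ▸ hw, uniq⟩
  -- every change-vertex occurs at least twice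
  have hdup : ∀ j : Fin 5, ∃ m : Fin 5, m ≠ j ∧ a m = a j := by
    intro j
    by_contra hc
    push_neg at hc
    have step : ∀ i : Fin 5, i ≠ j → e i (a j) = e (i + 1) (a j) := by
      intro i hij
      by_contra h
      exact hc i hij (h2 i (a j) h).symm
    have d1 : ∀ j : Fin 5, j + 1 ≠ j := by decide
    have d2 : ∀ j : Fin 5, j + 1 + 1 ≠ j := by decide
    have d3 : ∀ j : Fin 5, j + 1 + 1 + 1 ≠ j := by decide
    have d4 : ∀ j : Fin 5, j + 1 + 1 + 1 + 1 ≠ j := by decide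
    have c5 : ∀ j : Fin 5, j + 1 + 1 + 1 + 1 + 1 = j := by decide
    have chain : e (j + 1) (a j) = e j (a j) := by
      calc e (j + 1) (a j) = e (j + 1 + 1) (a j) := step (j + 1) (d1 j)
        _ = e (j + 1 + 1 + 1) (a j) := step _ (d2 j)
        _ = e (j + 1 + 1 + 1 + 1) (a j) := step _ (d3 j)
        _ = e (j + 1 + 1 + 1 + 1 + 1) (a j) := step _ (d4 j)
        _ = e j (a j) := by rw [c5]
    exact h1 j chain.symm
  exact core_dup_lemma a hne hdup
end

section
/- For every finite simple graph G and every natural number k, the k-coloring graph C_k(G) contains no induced subgraph isomorphic to K_4 − e, the graph on 4 vertices with exactly 5 edges (the complete graph on 4 vertices with one edge removed); that is, for every 4-element subset S of vertices of C_k(G), the subgraph induced on S is not isomorphic to K_4 − e. -/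
open SimpleGraph Finset

private lemma colg_aux {α β : Type*} {A B C : α → β} {u1 u2 : α}
    (h1 : A u1 ≠ C u1) (e1 : ∀ v, A v ≠ C v → v = u1)
    (h2 : B u2 ≠ C u2) (e2 : ∀ v, B v ≠ C v → v = u2)
    (hAB : A ≠ B) (hnab : ¬ ∃! v, A v ≠ B v) :
    u1 ≠ u2 ∧ (∀ v, v ≠ u1 → v ≠ u2 → A v = B v) ∧
      C u1 = B u1 ∧ C u2 = A u2 ∧ A u1 ≠ B u1 ∧ A u2 ≠ B u2 := by
  have off : ∀ v, v ≠ u1 → v ≠ u2 → A v = B v := by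
    intro v hv1 hv2
    have hAC : A v = C v := by
      by_contra hc; exact hv1 (e1 v hc)
    have hBC : B v = C v := by
      by_contra hc; exact hv2 (e2 v hc)
    rw [hAC, hBC]
  have hne : u1 ≠ u2 := by
    intro heq
    subst heq
    apply hnab
    obtain ⟨w, hw⟩ := Function.ne_iff.mp hAB
    have hwu : w = u1 := by
      by_contra hc; exact hw (off w hc hc)
    refine ⟨u1, by rwa [hwu] at hw, ?_⟩
    intro y hy
    by_contra hc; exact hy (off y hc hc)
  have hCB : C u1 = B u1 := by
    by_contra hc
    exact hne (e2 u1 (fun h => hc h.symm))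
  have hCA : C u2 = A u2 := by
    by_contra hc
    exact hne ((e1 u2 (fun h => hc h.symm)).symm)
  refine ⟨hne, off, hCB, hCA, ?_, ?_⟩
  · rw [← hCB]; exact h1
  · rw [← hCA]; exact fun h => h2 h.symm

/-- coloring graphs contain no induced `K₄ − e`. -/
theorem no_induced_K4_minus_e {V : Type*} [Fintype V] (G : SimpleGraph V) (k : ℕ)
    (S : Set {c : V → Fin k // IsProperColoring G c}) :
    IsEmpty ((ColGraph G k).induce S ≃g
      (⊤ : SimpleGraph (Fin 4)).deleteEdges {s(0, 1)}) := by
  constructor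
  intro e
  have key : ∀ i j : Fin 4, i ≠ j → s(i, j) ≠ s((0 : Fin 4), 1) →
      ∃! v, (e.symm i).1.1 v ≠ (e.symm j).1.1 v := by
    intro i j h1 h2
    refine (e.symm.map_adj_iff (v := i) (w := j)).mpr ?_
    rw [SimpleGraph.deleteEdges_adj]
    exact ⟨h1, h2⟩
  have hAB : (e.symm 0).1.1 ≠ (e.symm 1).1.1 := by
    intro hv
    have h01 : e.symm 0 = e.symm 1 := Subtype.ext (Subtype.ext hv)
    have : (0 : Fin 4) = 1 := e.symm.injective h01
    exact absurd this (by decide)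
  have hnab : ¬ ∃! v, (e.symm 0).1.1 v ≠ (e.symm 1).1.1 v := by
    intro hadj
    have h01 : ((⊤ : SimpleGraph (Fin 4)).deleteEdges {s(0, 1)}).Adj 0 1 :=
      (e.symm.map_adj_iff (v := (0 : Fin 4)) (w := 1)).mp hadj
    rw [SimpleGraph.deleteEdges_adj] at h01
    exact h01.2 rfl
  obtain ⟨u1, hu1, eu1⟩ := key 0 2 (by decide) (by decide)
  obtain ⟨u2, hu2, eu2⟩ := key 1 2 (by decide) (by decide)
  obtain ⟨u3, hu3, eu3⟩ := key 0 3 (by decide) (by decide)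
  obtain ⟨u4, hu4, eu4⟩ := key 1 3 (by decide) (by decide)
  obtain ⟨u5, hu5, eu5⟩ := key 2 3 (by decide) (by decide)
  obtain ⟨h12, off12, hG1, hG2, hAB1, hAB2⟩ := colg_aux hu1 eu1 hu2 eu2 hAB hnab
  obtain ⟨h34, off34, hH3, hH4, hAB3, hAB4⟩ := colg_aux hu3 eu3 hu4 eu4 hAB hnab
  have hu3m : u3 = u1 ∨ u3 = u2 := by
    by_contra hc
    push_neg at hc
    exact hAB3 (off12 u3 hc.1 hc.2)
  have hu4m : u4 = u1 ∨ u4 = u2 := by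
    by_contra hc
    push_neg at hc
    exact hAB4 (off12 u4 hc.1 hc.2)
  rcases hu3m with h3 | h3
  · -- u3 = u1, so u4 = u2, and the two middle colorings coincide
    have h4 : u4 = u2 := by
      rcases hu4m with h4 | h4
      · exact absurd (h4.trans h3.symm) (fun h => h34 h.symm)
      · exact h4
    subst h3; subst h4
    have hGHeq : (e.symm 2).1.1 = (e.symm 3).1.1 := by
      funext v
      by_cases hv1 : v = u3
      · subst hv1; rw [hG1, hH3]
      · by_cases hv2 : v = u4
        · subst hv2; rw [hG2, hH4]
        · have hAG : (e.symm 0).1.1 v = (e.symm 2).1.1 v := by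
            by_contra hc; exact hv1 (eu1 v hc)
          have hAH : (e.symm 0).1.1 v = (e.symm 3).1.1 v := by
            by_contra hc; exact hv1 (eu3 v hc)
          rw [← hAG, hAH]
    exact hu5 (by rw [hGHeq])
  · -- u3 = u2, so u4 = u1: the two middle colorings differ at two vertices
    have h4 : u4 = u1 := by
      rcases hu4m with h4 | h4
      · exact h4
      · exact absurd (h4.trans h3.symm) (fun h => h34 h.symm)
    subst h3; subst h4
    have hH1 : (e.symm 3).1.1 u4 = (e.symm 0).1.1 u4 := by
      by_contra hc
      exact h12 (eu3 u4 (fun h => hc h.symm))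
    have hH2 : (e.symm 3).1.1 u3 = (e.symm 1).1.1 u3 := by
      by_contra hc
      exact h12 ((eu4 u3 (fun h => hc h.symm)).symm)
    have d1 : (e.symm 2).1.1 u4 ≠ (e.symm 3).1.1 u4 := by
      rw [hG1, hH1]; exact fun h => hAB1 h.symm
    have d2 : (e.symm 2).1.1 u3 ≠ (e.symm 3).1.1 u3 := by
      rw [hG2, hH2]; exact hAB2
    exact h12 ((eu5 u4 d1).trans (eu5 u3 d2).symm)
end

section
/- Let G₁ and G₂ be finite simple graphs and let G₁ + G₂ denote their disjoint union. Then for every natural number k, the number of edges of C_k(G₁ + G₂) equals (number of edges of C_k(G₁)) · P_{G₂}(k) + (number of edges of C_k(G₂)) · P_{G₁}(k), where P_G(k) denotes the number of proper k-colorings of G. -/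
open SimpleGraph Finset

/-! Restricting a coloring of `G₁ + G₂` to the two sides identifies the `k`-coloring graph of
`G₁ + G₂` with the Cartesian product `C_k(G₁) □ C_k(G₂)`: two colorings differ at exactly one
vertex iff they differ at exactly one vertex on one side and agree on the other. In a Cartesian
product `A □ B` the degree of `(a, b)` is `deg a + deg b`, so summing degrees gives
`|E(A □ B)| = |E(A)| |B| + |E(B)| |A|`. -/

lemma existsUnique_sum_iff {α β : Type*} {p : α ⊕ β → Prop} :
    (∃! x, p x) ↔ (∃! a, p (.inl a)) ∧ (∀ b, ¬ p (.inr b)) ∨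
      (∃! b, p (.inr b)) ∧ ∀ a, ¬ p (.inl a) := by
  simp only [ExistsUnique, Sum.exists, Sum.forall, Sum.inl.injEq, Sum.inr.injEq, reduceCtorEq,
    imp_false]
  grind

theorem SimpleGraph.card_edgeFinset_boxProd {α β : Type*} [Fintype α] [Fintype β]
    (G : SimpleGraph α) (H : SimpleGraph β) [DecidableRel G.Adj] [DecidableRel H.Adj]
    [DecidableRel (G □ H).Adj] :
    #(G □ H).edgeFinset = #G.edgeFinset * Fintype.card β + #H.edgeFinset * Fintype.card α := by
  apply Nat.eq_of_mul_eq_mul_left two_pos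
  rw [← sum_degrees_eq_twice_card_edges, Fintype.sum_prod_type]
  simp only [degree_boxProd, sum_add_distrib, sum_const, card_univ, smul_eq_mul, sum_comm (γ := α),
    sum_degrees_eq_twice_card_edges]
  ring

theorem isProperColoring_sum_iff {V W : Type*} {G₁ : SimpleGraph V} {G₂ : SimpleGraph W} {k : ℕ}
    {c : V ⊕ W → Fin k} :
    IsProperColoring (G₁ ⊕g G₂) c ↔
      IsProperColoring G₁ (c ∘ .inl) ∧ IsProperColoring G₂ (c ∘ .inr) := by
  simp [IsProperColoring, Sum.forall]

def colGraphSumIsoBoxProd {V W : Type*} (G₁ : SimpleGraph V) (G₂ : SimpleGraph W) (k : ℕ) :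
    ColGraph (G₁ ⊕g G₂) k ≃g ColGraph G₁ k □ ColGraph G₂ k where
  toEquiv := ((Equiv.sumArrowEquivProdArrow V W (Fin k)).subtypeEquiv
    fun _ => isProperColoring_sum_iff).trans Equiv.subtypeProdEquivProd
  map_rel_iff' := by
    simp only [ColGraph, ne_eq, Equiv.trans_apply, boxProd_adj, Subtype.ext_iff, funext_iff,
      existsUnique_sum_iff, Decidable.not_not]
    exact Iff.rfl

/-- the chromatic pairs polynomial of a disjoint union. -/
theorem numEdges_disjoint_union {V W : Type*} [Fintype V] [Fintype W]
    (G₁ : SimpleGraph V) (G₂ : SimpleGraph W) (k : ℕ) :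
    numEdges (G₁ ⊕g G₂) k =
      numEdges G₁ k * numColorings G₂ k + numEdges G₂ k * numColorings G₁ k := by
  classical
  simp only [numEdges, numColorings, Nat.card_congr (colGraphSumIsoBoxProd G₁ G₂ k).mapEdgeSet,
    Nat.card_eq_fintype_card, ← edgeFinset_card, card_edgeFinset_boxProd]
end

section
/- Let G be a finite simple graph with an independent set U of size s (no two vertices of U are adjacent), and suppose the chromatic number of the induced subgraph G − U equals ℓ. Then for every natural number k ≥ ℓ + 2, the k-coloring graph C_k(G) contains an induced subgraph isomorphic to the s-dimensional hypercube Q_s. -/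
open SimpleGraph Finset

/-- an independent set of size `s` with `ℓ`-chromatic complement yields an
induced `s`-cube in every `k`-coloring graph with `k ≥ ℓ + 2`. -/
theorem independent_set_gives_hypercube {V : Type*} [Fintype V] (G : SimpleGraph V)
    (U : Set V) (s ℓ : ℕ)
    (hind : ∀ u ∈ U, ∀ v ∈ U, ¬ G.Adj u v) (hs : U.ncard = s)
    (hchrom : (G.induce Uᶜ).chromaticNumber = (ℓ : ℕ∞)) :
    ∀ k : ℕ, ℓ + 2 ≤ k →
      ∃ S : Set {c : V → Fin k // IsProperColoring G c},
        Nonempty ((ColGraph G k).induce S ≃g hypercube s) := by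
  classical
  intro k hk
  have hcol : (G.induce Uᶜ).Colorable ℓ :=
    SimpleGraph.chromaticNumber_le_iff_colorable.mp (le_of_eq hchrom)
  obtain ⟨c₀⟩ := hcol
  have hUfin : Fintype ↥U := (Set.toFinite U).fintype
  have hcard : Fintype.card ↥U = s := by
    rw [← Nat.card_eq_fintype_card, Nat.card_coe_set_eq, hs]
  let e : ↥U ≃ Fin s := Fintype.equivFinOfCardEq hcard
  let bcol : Bool → Fin k := fun b => if b then ⟨1, by omega⟩ else ⟨0, by omega⟩
  have hb : ∀ b b' : Bool, bcol b = bcol b' ↔ b = b' := by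
    intro b b'
    cases b <;> cases b' <;> simp [bcol, Fin.ext_iff]
  let col : (Fin s → Bool) → V → Fin k := fun x v =>
    if h : v ∈ U then bcol (x (e ⟨v, h⟩))
    else ⟨(c₀ ⟨v, h⟩).val + 2, by have := (c₀ ⟨v, h⟩).isLt; omega⟩
  have hblt : ∀ b, (bcol b).val < 2 := by intro b; cases b <;> simp [bcol]
  have hproper : ∀ x, IsProperColoring G (col x) := by
    intro x u v huv heq
    have hval := congrArg Fin.val heq
    by_cases hu : u ∈ U <;> by_cases hv : v ∈ U
    · exact hind u hu v hv huv
    · simp only [col, dif_pos hu, dif_neg hv] at hval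
      have := hblt (x (e ⟨u, hu⟩)); omega
    · simp only [col, dif_neg hu, dif_pos hv] at hval
      have := hblt (x (e ⟨v, hv⟩)); omega
    · simp only [col, dif_neg hu, dif_neg hv] at hval
      have hadj : (G.induce Uᶜ).Adj ⟨u, hu⟩ ⟨v, hv⟩ := huv
      exact c₀.valid hadj (Fin.ext (by omega))
  have hdiff : ∀ (x y : Fin s → Bool) (v : V),
      col x v ≠ col y v ↔ ∃ h : v ∈ U, x (e ⟨v, h⟩) ≠ y (e ⟨v, h⟩) := by
    intro x y v
    by_cases h : v ∈ U
    · simp only [col, dif_pos h, ne_eq, hb, exists_prop]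
      exact ⟨fun hne => ⟨h, hne⟩, fun ⟨_, hne⟩ => hne⟩
    · simp only [col, dif_neg h, ne_eq, not_true_eq_false]
      constructor
      · intro hne; exact hne.elim
      · rintro ⟨h', -⟩; exact absurd h' h
  let F : (Fin s → Bool) → {c : V → Fin k // IsProperColoring G c} :=
    fun x => ⟨col x, hproper x⟩
  have hcoord : ∀ (x y : Fin s → Bool) (i : Fin s), x i ≠ y i →
      col x ↑(e.symm i) ≠ col y ↑(e.symm i) := by
    intro x y i hi
    rw [hdiff]
    refine ⟨(e.symm i).2, ?_⟩
    have : (⟨↑(e.symm i), (e.symm i).2⟩ : ↥U) = e.symm i := rfl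
    rw [this, e.apply_symm_apply]
    exact hi
  have hFinj : Function.Injective F := by
    intro x y hxy
    funext i
    by_contra hi
    exact (hcoord x y i hi) (congrFun (congrArg Subtype.val hxy) _)
  have key : ∀ x y : Fin s → Bool,
      (∃! v, col x v ≠ col y v) ↔ ∃! i, x i ≠ y i := by
    intro x y
    constructor
    · rintro ⟨v, hv, hun⟩
      obtain ⟨h, hxy⟩ := (hdiff x y v).mp hv
      refine ⟨e ⟨v, h⟩, hxy, ?_⟩
      intro j hj
      have hw := hcoord x y j hj
      have hveq : (↑(e.symm j) : V) = v := hun _ hw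
      have : e.symm j = ⟨v, h⟩ := Subtype.ext hveq
      rw [← this, e.apply_symm_apply]
    · rintro ⟨i, hi, hun⟩
      refine ⟨↑(e.symm i), hcoord x y i hi, ?_⟩
      intro w hw
      obtain ⟨h, hxy⟩ := (hdiff x y w).mp hw
      have : e ⟨w, h⟩ = i := hun _ hxy
      have h2 : (⟨w, h⟩ : ↥U) = e.symm i := by rw [← this, e.symm_apply_apply]
      exact congrArg Subtype.val h2
  refine ⟨Set.range F, ⟨?_⟩⟩
  refine SimpleGraph.Iso.symm ⟨Equiv.ofInjective F hFinj, ?_⟩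
  intro x y
  show (∃! v, col x v ≠ col y v) ↔ ∃! i, x i ≠ y i
  exact key x y
end
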